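/- arXiv:1605.04499 — 3 statements merged into one kernel-verified Lean document; each statement's English description precedes it below -/
import Mathlib

section
/- Chain rule for the reversed operator ∂⁻ under left paravector translation: let Γ be a constant paravector, T_Γ : X ↦ ΓX left paravector multiplication on ℂ⁴, Γ⁻ = (α, −𝛃) the reverse of Γ = (α, 𝛃), and C : ℂ⁴ → ℂ × ℂ³ holomorphic. Then for all X, ∂⁻(C ∘ T_Γ)(X) = Γ⁻·(∂⁻C)(T_Γ X). -/
noncomputable section
open scoped BigOperators

abbrev Vec3 : Type := Fin 3 → ℂ
abbrev Pv : Type := ℂ × Vec3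

def dot3 (a b : Vec3) : ℂ := ∑ i, a i * b i

def cross3 (a b : Vec3) : Vec3 :=
  ![a 1 * b 2 - a 2 * b 1, a 2 * b 0 - a 0 * b 2, a 0 * b 1 - a 1 * b 0]

def pmul (A B : Pv) : Pv :=
  (A.1 * B.1 + dot3 A.2 B.2,
   fun j => A.1 * B.2 j + B.1 * A.2 j + Complex.I * cross3 A.2 B.2 j)

def detP (A : Pv) : ℂ := A.1 ^ 2 - dot3 A.2 A.2

def revP (A : Pv) : Pv := (A.1, -A.2)

abbrev CPt : Type := Fin 4 → ℂ

def toPv (X : CPt) : Pv := (X 0, fun i => X i.succ)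

def ofPv (A : Pv) : CPt := Fin.cons A.1 A.2

def cpd (i : Fin 4) (f : CPt → ℂ) (x : CPt) : ℂ := fderiv ℂ f x (Pi.single i 1)

def cdiv3 (Φ : CPt → Vec3) (x : CPt) : ℂ := ∑ i : Fin 3, cpd i.succ (fun y => Φ y i) x

def cgrad3 (f : CPt → ℂ) (x : CPt) : Vec3 := fun i => cpd i.succ f x

def ccurl3 (Φ : CPt → Vec3) (x : CPt) : Vec3 :=
  ![cpd 2 (fun y => Φ y 2) x - cpd 3 (fun y => Φ y 1) x,
    cpd 3 (fun y => Φ y 0) x - cpd 1 (fun y => Φ y 2) x,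
    cpd 1 (fun y => Φ y 1) x - cpd 2 (fun y => Φ y 0) x]

def Dc (A : CPt → Pv) (x : CPt) : Pv :=
  (cpd 0 (fun y => (A y).1) x + cdiv3 (fun y => (A y).2) x,
   fun j => cpd 0 (fun y => (A y).2 j) x + cgrad3 (fun y => (A y).1) x j
     + Complex.I * ccurl3 (fun y => (A y).2) x j)

def Dcm (A : CPt → Pv) (x : CPt) : Pv :=
  (cpd 0 (fun y => (A y).1) x - cdiv3 (fun y => (A y).2) x,
   fun j => cpd 0 (fun y => (A y).2 j) x - cgrad3 (fun y => (A y).1) x j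
     - Complex.I * ccurl3 (fun y => (A y).2) x j)

/-!
Writing `eᵢ = toPv (Pi.single i 1)`, the operator is `∂⁻A = ∑ᵢ rev(eᵢ) ∂ᵢA`. By the chain rule
`∂ᵢ(C ∘ T_Γ) = DC (Γ eᵢ) = ∑ⱼ (Γ eᵢ)ⱼ ∂ⱼC`. The matrix of `X ↦ ΓX` is the transpose of that of
`X ↦ XΓ`, so `∑ᵢ (Γ eᵢ)ⱼ rev(eᵢ) = rev(eⱼ Γ) = rev(Γ) rev(eⱼ)`, and associativity of the paravector
product pulls `rev(Γ)` out of the sum.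
-/

lemma pv_ext {A B : Pv} (h₀ : A.1 = B.1) (h₁ : A.2 0 = B.2 0) (h₂ : A.2 1 = B.2 1)
    (h₃ : A.2 2 = B.2 2) : A = B :=
  Prod.ext h₀ (funext fun k => by fin_cases k <;> assumption)

lemma ofPv_zero (A : Pv) : ofPv A 0 = A.1 := rfl

lemma ofPv_succ (A : Pv) (k : Fin 3) : ofPv A k.succ = A.2 k := rfl

def pmulₗ : Pv →ₗ[ℂ] Pv →ₗ[ℂ] Pv :=
  LinearMap.mk₂ ℂ pmul
    (fun A A' B => by apply pv_ext <;> simp [pmul, dot3, cross3, Fin.sum_univ_three] <;> ring)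
    (fun c A B => by apply pv_ext <;> simp [pmul, dot3, cross3, Fin.sum_univ_three] <;> ring)
    (fun A B B' => by apply pv_ext <;> simp [pmul, dot3, cross3, Fin.sum_univ_three] <;> ring)
    (fun c A B => by apply pv_ext <;> simp [pmul, dot3, cross3, Fin.sum_univ_three] <;> ring)

lemma pmulₗ_apply (A B : Pv) : pmulₗ A B = pmul A B := rfl

lemma pmul_assoc (A B C : Pv) : pmul (pmul A B) C = pmul A (pmul B C) := by
  apply pv_ext <;> simp [pmul, dot3, cross3, Fin.sum_univ_three] <;> ring_nf <;>
    simp only [Complex.I_sq] <;> ring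

lemma revP_pmul (A B : Pv) : revP (pmul A B) = pmul (revP B) (revP A) := by
  apply pv_ext <;> simp [revP, pmul, dot3, cross3, Fin.sum_univ_three] <;> ring

lemma sum_ofPv_pmul_smul_revP (Γ : Pv) (j : Fin 4) :
    ∑ i, ofPv (pmul Γ (toPv (Pi.single i 1))) j • revP (toPv (Pi.single i 1)) =
      revP (pmul (toPv (Pi.single j 1)) Γ) := by
  refine Fin.cases ?_ (fun k => ?_) j
  · simp only [ofPv_zero]
    apply pv_ext <;>
      simp [revP, pmul, toPv, dot3, cross3, Fin.sum_univ_four, Fin.sum_univ_three, Pi.single_apply]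
  · simp only [ofPv_succ]
    fin_cases k <;> apply pv_ext <;>
      simp [revP, pmul, toPv, dot3, cross3, Fin.sum_univ_four, Fin.sum_univ_three, Pi.single_apply]

def pmulLeftL (Γ : Pv) : CPt →L[ℂ] CPt :=
  LinearMap.toContinuousLinearMap
    ((Fin.consLinearEquiv ℂ fun _ => ℂ).toLinearMap ∘ₗ pmulₗ Γ ∘ₗ
      (Fin.consLinearEquiv ℂ fun _ => ℂ).symm.toLinearMap)

lemma cpd_fst_eq_fderiv {A : CPt → Pv} {x : CPt} (hA : DifferentiableAt ℂ A x) (i : Fin 4) :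
    cpd i (fun y => (A y).1) x = (fderiv ℂ A x (Pi.single i 1)).1 := by
  rw [cpd, fderiv.fst hA]
  rfl

lemma cpd_snd_eq_fderiv {A : CPt → Pv} {x : CPt} (hA : DifferentiableAt ℂ A x) (i : Fin 4)
    (k : Fin 3) : cpd i (fun y => (A y).2 k) x = (fderiv ℂ A x (Pi.single i 1)).2 k := by
  rw [cpd, fderiv_apply hA.snd k, fderiv.snd hA]
  rfl

lemma Dcm_eq_sum_fderiv {A : CPt → Pv} {x : CPt} (hA : DifferentiableAt ℂ A x) :
    Dcm A x = ∑ i, pmul (revP (toPv (Pi.single i 1))) (fderiv ℂ A x (Pi.single i 1)) := by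
  simp only [Dcm, cdiv3, cgrad3, ccurl3, cpd_fst_eq_fderiv hA, cpd_snd_eq_fderiv hA]
  generalize fderiv ℂ A x = D
  apply pv_ext <;>
    simp [pmul, revP, toPv, dot3, cross3, Fin.sum_univ_four, Fin.sum_univ_three, Pi.single_apply] <;>
    ring

lemma sum_revP_pmul_apply_pmulLeftL (Γ : Pv) (D : CPt →L[ℂ] Pv) :
    ∑ i, pmul (revP (toPv (Pi.single i 1))) (D (pmulLeftL Γ (Pi.single i 1))) =
      pmul (revP Γ) (∑ j, pmul (revP (toPv (Pi.single j 1))) (D (Pi.single j 1))) := by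
  calc _ = ∑ i, ∑ j, ofPv (pmul Γ (toPv (Pi.single i 1))) j •
          pmul (revP (toPv (Pi.single i 1))) (D (Pi.single j 1)) := by
        refine Finset.sum_congr rfl fun i _ => ?_
        rw [pi_eq_sum_univ' (pmulLeftL Γ (Pi.single i 1))]
        simp only [map_sum, map_smul, ← pmulₗ_apply]
        rfl
    _ = ∑ j, pmul (∑ i, ofPv (pmul Γ (toPv (Pi.single i 1))) j • revP (toPv (Pi.single i 1)))
          (D (Pi.single j 1)) := by
        rw [Finset.sum_comm]
        simp only [← pmulₗ_apply, map_sum, map_smul, LinearMap.sum_apply, LinearMap.smul_apply]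
    _ = ∑ j, pmul (revP Γ) (pmul (revP (toPv (Pi.single j 1))) (D (Pi.single j 1))) := by
        simp only [sum_ofPv_pmul_smul_revP, revP_pmul, pmul_assoc]
    _ = _ := by simp only [← pmulₗ_apply, map_sum]

theorem Dcm_left_translation (Γ : Pv) (C : CPt → Pv) (hC : Differentiable ℂ C) :
    ∀ x : CPt,
      Dcm (fun y => C (ofPv (pmul Γ (toPv y)))) x =
        pmul (revP Γ) (Dcm C (ofPv (pmul Γ (toPv x)))) := by
  intro x
  have hchain : HasFDerivAt (fun y => C (ofPv (pmul Γ (toPv y))))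
      ((fderiv ℂ C (pmulLeftL Γ x)).comp (pmulLeftL Γ)) x :=
    (hC _).hasFDerivAt.comp x (pmulLeftL Γ).hasFDerivAt
  rw [Dcm_eq_sum_fderiv hchain.differentiableAt, hchain.fderiv, Dcm_eq_sum_fderiv (hC _)]
  exact sum_revP_pmul_apply_pmulLeftL Γ _
end
end

section
/- Invariance of the d'Alembertian under orthogonal paravector substitution: let Λ = (α, 𝛃) be a paravector with det Λ = α² − 𝛃·𝛃 = 1, T_Λ : ℂ⁴ → ℂ⁴ the map X ↦ ΛX, and C : ℂ⁴ → ℂ × ℂ³ a twice (complex-)differentiable paravector field. Then □(C ∘ T_Λ) = (□C) ∘ T_Λ, where □ = ∂⁻∂ is the componentwise d'Alembertian ∂²/∂t² − Δ. -/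
noncomputable section
open scoped BigOperators

/-!
Write `εₖ` for the paravector of the `k`-th unit vector of `ℂ⁴` and `ε̄ₖ` for its reversion. Then
`∂ = ∑ εₖ ∂ₖ` and `∂⁻ = ∑ ε̄ₖ ∂ₖ`, so by associativity of the paravector product
`∂⁻∂ = ∑ₖₗ (ε̄ₗ εₖ) ∂ₗ∂ₖ`. Since second derivatives are symmetric and
`ε̄ₗ εₖ + ε̄ₖ εₗ = 2 ηₖₗ` with `η = diag(1, -1, -1, -1)`, this is the contraction `□ = ∑ ηₖ ∂ₖ²` of
the Hessian with `η`. Such a contraction is unchanged by a linear substitution `L` with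
`L η Lᵀ = η`, and left multiplication by `Λ` is one, because `det (ΛX) = det Λ · det X = det X`.
-/

theorem pmul_assoc_s15 (a b c : Pv) : pmul (pmul a b) c = pmul a (pmul b c) := by
  refine Prod.ext ?_ (funext fun j => ?_)
  · simp only [pmul, dot3, cross3, Fin.sum_univ_three, Matrix.cons_val_zero, Matrix.cons_val_one,
      Matrix.cons_val]
    ring
  · fin_cases j <;>
    · simp [pmul, dot3, cross3, Fin.sum_univ_three]
      ring_nf
      simp only [Complex.I_sq]
      ring

theorem pmul_add (a b c : Pv) : pmul a (b + c) = pmul a b + pmul a c := by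
  refine Prod.ext ?_ (funext fun j => ?_)
  · simp only [pmul, dot3, Prod.fst_add, Prod.snd_add, Pi.add_apply, Fin.sum_univ_three]
    ring
  · fin_cases j <;> simp [pmul, cross3] <;> ring

theorem add_pmul (a b c : Pv) : pmul (a + b) c = pmul a c + pmul b c := by
  refine Prod.ext ?_ (funext fun j => ?_)
  · simp only [pmul, dot3, Prod.fst_add, Prod.snd_add, Pi.add_apply, Fin.sum_univ_three]
    ring
  · fin_cases j <;> simp [pmul, cross3] <;> ring

theorem pmul_smul (a b : Pv) (c : ℂ) : pmul a (c • b) = c • pmul a b := by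
  refine Prod.ext ?_ (funext fun j => ?_)
  · simp only [pmul, dot3, Prod.smul_fst, Prod.smul_snd, Pi.smul_apply, smul_eq_mul,
      Fin.sum_univ_three]
    ring
  · fin_cases j <;> simp [pmul, cross3] <;> ring

theorem scalar_pmul (c : ℂ) (b : Pv) : pmul (c, 0) b = c • b := by
  refine Prod.ext ?_ (funext fun j => ?_)
  · simp [pmul, dot3]
  · fin_cases j <;> simp [pmul, cross3]

def pmulL (a : Pv) : Pv →L[ℂ] Pv :=
  LinearMap.toContinuousLinearMap
    { toFun := pmul a
      map_add' := pmul_add a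
      map_smul' := fun c b => pmul_smul a b c }

@[simp]
theorem pmulL_apply (a b : Pv) : pmulL a b = pmul a b := rfl

def unitPv (k : Fin 4) : Pv := toPv (Pi.single k 1)

def minkowskiSign : Fin 4 → ℂ := ![1, -1, -1, -1]

theorem pmul_revP_unitPv_add_swap (k l : Fin 4) :
    pmul (revP (unitPv k)) (unitPv l) + pmul (revP (unitPv l)) (unitPv k) =
      (if k = l then 2 * minkowskiSign k else 0, 0) := by
  refine Prod.ext ?_ (funext fun j => ?_)
  · fin_cases k <;> fin_cases l <;>
      simp [pmul, revP, unitPv, toPv, dot3, minkowskiSign, Fin.sum_univ_three] <;> norm_num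
  · fin_cases k <;> fin_cases l <;> fin_cases j <;> simp [pmul, revP, unitPv, toPv, cross3]

theorem sum_pmul_revP_unitPv_of_symm (H : Fin 4 → Fin 4 → Pv) (hH : ∀ k l, H k l = H l k) :
    ∑ l, pmul (revP (unitPv l)) (∑ k, pmul (unitPv k) (H l k)) =
      ∑ k, minkowskiSign k • H k k := by
  have hS : ∑ l, pmul (revP (unitPv l)) (∑ k, pmul (unitPv k) (H l k)) =
      ∑ l, ∑ k, pmul (pmul (revP (unitPv l)) (unitPv k)) (H l k) := by
    simp only [← pmulL_apply, map_sum]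
    simp only [pmulL_apply, pmul_assoc_s15]
  have hS' : ∑ l, ∑ k, pmul (pmul (revP (unitPv l)) (unitPv k)) (H l k) =
      ∑ l, ∑ k, pmul (pmul (revP (unitPv k)) (unitPv l)) (H l k) := by
    rw [Finset.sum_comm]
    simp only [hH]
  apply smul_right_injective Pv (two_ne_zero (α := ℂ))
  calc (2 : ℂ) • ∑ l, pmul (revP (unitPv l)) (∑ k, pmul (unitPv k) (H l k))
      = ∑ l, ∑ k, pmul (pmul (revP (unitPv l)) (unitPv k) + pmul (revP (unitPv k)) (unitPv l))
          (H l k) := by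
        simp only [two_smul, add_pmul, Finset.sum_add_distrib]
        rw [← hS', hS]
    _ = (2 : ℂ) • ∑ k, minkowskiSign k • H k k := by
        simp [pmul_revP_unitPv_add_swap, scalar_pmul, Finset.smul_sum, smul_smul]

section Dirac

variable {A : CPt → Pv} {x : CPt}

theorem cpd_fst (hA : DifferentiableAt ℂ A x) (i : Fin 4) :
    cpd i (fun y => (A y).1) x = (fderiv ℂ A x (Pi.single i 1)).1 := by
  simp [cpd, fderiv.fst hA]

theorem cpd_snd (hA : DifferentiableAt ℂ A x) (i : Fin 4) (j : Fin 3) :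
    cpd i (fun y => (A y).2 j) x = (fderiv ℂ A x (Pi.single i 1)).2 j := by
  simp [cpd, fderiv_apply hA.snd, fderiv.snd hA]

theorem Dc_eq_sum (hA : DifferentiableAt ℂ A x) :
    Dc A x = ∑ k, pmul (unitPv k) (fderiv ℂ A x (Pi.single k 1)) := by
  refine Prod.ext ?_ (funext fun j => ?_)
  · simp [Dc, cdiv3, cpd_fst hA, cpd_snd hA, pmul, unitPv, toPv, dot3, Fin.sum_univ_four,
      Fin.sum_univ_three]
    ring
  · fin_cases j <;>
      simp [Dc, cgrad3, ccurl3, cpd_fst hA, cpd_snd hA, pmul, unitPv, toPv, cross3,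
        Fin.sum_univ_four] <;> ring

theorem Dcm_eq_sum (hA : DifferentiableAt ℂ A x) :
    Dcm A x = ∑ k, pmul (revP (unitPv k)) (fderiv ℂ A x (Pi.single k 1)) := by
  refine Prod.ext ?_ (funext fun j => ?_)
  · simp [Dcm, cdiv3, cpd_fst hA, cpd_snd hA, pmul, revP, unitPv, toPv, dot3, Fin.sum_univ_four,
      Fin.sum_univ_three]
    ring
  · fin_cases j <;>
      simp [Dcm, cgrad3, ccurl3, cpd_fst hA, cpd_snd hA, pmul, revP, unitPv, toPv, cross3,
        Fin.sum_univ_four] <;> ring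

end Dirac

def box {E : Type*} [NormedAddCommGroup E] [NormedSpace ℂ E] (A : CPt → E) (x : CPt) : E :=
  ∑ k, minkowskiSign k • fderiv ℂ (fderiv ℂ A) x (Pi.single k 1) (Pi.single k 1)

theorem hasFDerivAt_Dc {A : CPt → Pv} (hA : ContDiff ℂ 2 A) (x : CPt) :
    HasFDerivAt (Dc A)
      (∑ k, (pmulL (unitPv k)).comp ((fderiv ℂ (fderiv ℂ A) x).flip (Pi.single k 1))) x := by
  have hDc : Dc A = fun y => ∑ k, pmulL (unitPv k) (fderiv ℂ A y (Pi.single k 1)) :=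
    funext fun y => Dc_eq_sum (hA.differentiable two_ne_zero y)
  have hA' : Differentiable ℂ (fderiv ℂ A) :=
    (hA.fderiv_right (m := 1) (by norm_num)).differentiable one_ne_zero
  rw [hDc]
  refine HasFDerivAt.fun_sum fun k _ => ?_
  convert (pmulL (unitPv k)).hasFDerivAt.comp x
    ((hA' x).hasFDerivAt.clm_apply (hasFDerivAt_const (Pi.single k 1) x)) using 1 <;>
    simp [Function.comp_def]

theorem Dcm_Dc_eq_box {A : CPt → Pv} (hA : ContDiff ℂ 2 A) (x : CPt) :
    Dcm (Dc A) x = box A x := by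
  rw [Dcm_eq_sum (hasFDerivAt_Dc hA x).differentiableAt, (hasFDerivAt_Dc hA x).fderiv]
  simp only [sum_apply, ContinuousLinearMap.comp_apply, ContinuousLinearMap.flip_apply,
    pmulL_apply]
  exact sum_pmul_revP_unitPv_of_symm _ fun k l =>
    hA.contDiffAt.isSymmSndFDerivAt (by simp) _ _

theorem sum_smul_apply_apply_eq_sum_sum {𝕜 ι κ F : Type*} [NormedField 𝕜] [Fintype ι]
    [DecidableEq ι] [Fintype κ] [NormedAddCommGroup F] [NormedSpace 𝕜 F]
    (B : (ι → 𝕜) →L[𝕜] (ι → 𝕜) →L[𝕜] F) (c : κ → 𝕜) (v : κ → ι → 𝕜) :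
    ∑ k, c k • B (v k) (v k) =
      ∑ a, ∑ b, (∑ k, c k * v k a * v k b) • B (Pi.single a 1) (Pi.single b 1) := by
  have hv : ∀ k, B (v k) (v k) =
      ∑ a, ∑ b, (v k a * v k b) • B (Pi.single a 1) (Pi.single b 1) := by
    intro k
    conv_lhs => rw [pi_eq_sum_univ' (v k)]
    simp only [map_sum, map_smul, sum_apply, smul_apply, Finset.smul_sum, smul_smul]
    rw [Finset.sum_comm]
    simp only [mul_comm]
  simp only [hv, Finset.smul_sum, smul_smul, Finset.sum_smul]
  rw [Finset.sum_comm]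
  refine Finset.sum_congr rfl fun a _ => ?_
  rw [Finset.sum_comm]
  simp only [mul_assoc]

theorem fderiv_fderiv_comp_clm {𝕜 E E' F : Type*} [NontriviallyNormedField 𝕜]
    [NormedAddCommGroup E] [NormedSpace 𝕜 E] [NormedAddCommGroup E'] [NormedSpace 𝕜 E']
    [NormedAddCommGroup F] [NormedSpace 𝕜 F] (L : E →L[𝕜] E') {f : E' → F}
    (hf : ContDiff 𝕜 2 f) (x v w : E) :
    fderiv 𝕜 (fderiv 𝕜 (f ∘ L)) x v w = fderiv 𝕜 (fderiv 𝕜 f) (L x) (L v) (L w) := by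
  simpa [iteratedFDeriv_two_apply] using
    congr($(L.iteratedFDeriv_comp_right hf x le_rfl) ![v, w])

theorem box_comp_of_preserves_minkowski {E : Type*} [NormedAddCommGroup E] [NormedSpace ℂ E]
    (L : CPt →L[ℂ] CPt)
    (hL : ∀ a b, ∑ k, minkowskiSign k * L (Pi.single k 1) a * L (Pi.single k 1) b =
      if a = b then minkowskiSign a else 0)
    {A : CPt → E} (hA : ContDiff ℂ 2 A) (x : CPt) :
    box (A ∘ L) x = box A (L x) := by
  simp only [box, fderiv_fderiv_comp_clm L hA]
  rw [sum_smul_apply_apply_eq_sum_sum]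
  simp [hL]

def toPvL : CPt →L[ℂ] Pv :=
  LinearMap.toContinuousLinearMap
    { toFun := toPv
      map_add' := fun _ _ => rfl
      map_smul' := fun _ _ => rfl }

def ofPvL : Pv →L[ℂ] CPt :=
  LinearMap.toContinuousLinearMap
    { toFun := ofPv
      map_add' := fun _ _ => funext fun i => Fin.cases rfl (fun _ => rfl) i
      map_smul' := fun _ _ => funext fun i => Fin.cases rfl (fun _ => rfl) i }

def pvLeftMul (Λ : Pv) : CPt →L[ℂ] CPt := ofPvL ∘L pmulL Λ ∘L toPvL

theorem pvLeftMul_apply (Λ : Pv) (z : CPt) : pvLeftMul Λ z = ofPv (pmul Λ (toPv z)) := rfl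

theorem pvLeftMul_preserves_minkowski {Λ : Pv} (hΛ : detP Λ = 1) (a b : Fin 4) :
    ∑ k, minkowskiSign k * pvLeftMul Λ (Pi.single k 1) a * pvLeftMul Λ (Pi.single k 1) b =
      if a = b then minkowskiSign a else 0 := by
  have hcoord : ∀ A : Pv, ofPv A 0 = A.1 ∧ ofPv A 1 = A.2 0 ∧ ofPv A 2 = A.2 1 ∧
      ofPv A 3 = A.2 2 := fun _ => ⟨rfl, rfl, rfl, rfl⟩
  simp only [detP, dot3, Fin.sum_univ_three] at hΛ
  -- each entry of `M η Mᵀ - η`, `M` the matrix of `pvLeftMul Λ`, is `0` or `±(detP Λ - 1)`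
  fin_cases a <;> fin_cases b <;>
    simp [pvLeftMul_apply, hcoord, toPv, pmul, dot3, cross3, minkowskiSign, Fin.sum_univ_four,
      Fin.sum_univ_three] <;>
    ring_nf <;> (try simp only [Complex.I_sq]) <;>
    first | linear_combination hΛ | linear_combination -hΛ | ring

theorem box_invariant (Λ : Pv) (hΛ : detP Λ = 1) (C : CPt → Pv) (hC : ContDiff ℂ 2 C) :
    ∀ x : CPt,
      Dcm (fun y => Dc (fun z => C (ofPv (pmul Λ (toPv z)))) y) x =
        Dcm (fun y => Dc C y) (ofPv (pmul Λ (toPv x))) := by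
  intro x
  have hT : (fun z => C (ofPv (pmul Λ (toPv z)))) = C ∘ pvLeftMul Λ := rfl
  rw [hT, Dcm_Dc_eq_box (hC.comp (pvLeftMul Λ).contDiff), ← pvLeftMul_apply, Dcm_Dc_eq_box hC]
  exact box_comp_of_preserves_minkowski _ (pvLeftMul_preserves_minkowski hΛ) hC x
end
end

section
/- Rotation covariance of a first-order paravector field equation (Example 2 of the paper): let Λ be an orthogonal paravector (det Λ = 1) with inverse Λ⁻ (its reverse), and let A, B : ℂ⁴ → ℂ × ℂ³ be holomorphic paravector fields satisfying ∂A = B pointwise. Define the rotated fields A'(X) := Λ·A(Λ⁻XΛ)·Λ⁻ and B'(X) := Λ·B(Λ⁻XΛ)·Λ⁻, where Λ⁻XΛ uses the identification of space-time points with paravectors. Then ∂A' = B' pointwise. -/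
noncomputable section
open scoped BigOperators

def Cg (Λ : Pv) (P : Pv) : Pv := pmul (pmul Λ P) (revP Λ)
def Lrot (Λ : Pv) (y : CPt) : CPt := ofPv (pmul (pmul (revP Λ) (toPv y)) Λ)

@[simp] lemma ofPv0 (P : Pv) : ofPv P 0 = P.1 := rfl
@[simp] lemma ofPv1 (P : Pv) : ofPv P 1 = P.2 0 := rfl
@[simp] lemma ofPv2 (P : Pv) : ofPv P 2 = P.2 1 := rfl
@[simp] lemma ofPv3 (P : Pv) : ofPv P 3 = P.2 2 := rfl
lemma finmk0 (h : 0 < 3) : (⟨0, h⟩ : Fin 3) = 0 := rfl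
lemma finmk1 (h : 1 < 3) : (⟨1, h⟩ : Fin 3) = 1 := rfl
lemma finmk2 (h : 2 < 3) : (⟨2, h⟩ : Fin 3) = 2 := rfl
@[simp] lemma fs0 : (0 : Fin 3).succ = 1 := rfl
@[simp] lemma fs1 : (1 : Fin 3).succ = 2 := rfl
@[simp] lemma fs2 : (2 : Fin 3).succ = 3 := rfl

lemma Cg_linear (Λ : Pv) : IsLinearMap ℂ (Cg Λ) := by
  constructor
  · intro P Q
    refine Prod.ext ?_ (funext fun j => ?_) <;> [skip; fin_cases j] <;>
      simp [Cg, pmul, revP, dot3, cross3, Fin.sum_univ_three, Prod.fst_add, Prod.snd_add] <;> ring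
  · intro c P
    refine Prod.ext ?_ (funext fun j => ?_) <;> [skip; fin_cases j] <;>
      simp [Cg, pmul, revP, dot3, cross3, Fin.sum_univ_three, smul_eq_mul] <;> ring

set_option maxHeartbeats 1000000 in
lemma Lrot_linear (Λ : Pv) : IsLinearMap ℂ (Lrot Λ) := by
  constructor
  · intro y z
    funext ν
    refine Fin.cases ?_ (fun i => ?_) ν
    · simp [Lrot, pmul, revP, toPv, dot3, cross3, Fin.sum_univ_three]; ring
    · fin_cases i <;>
        simp [Lrot, pmul, revP, toPv, dot3, cross3, Fin.sum_univ_three] <;> ring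
  · intro c y
    funext ν
    refine Fin.cases ?_ (fun i => ?_) ν
    · simp [Lrot, pmul, revP, toPv, dot3, cross3, Fin.sum_univ_three, smul_eq_mul]; ring
    · fin_cases i <;>
        simp [Lrot, pmul, revP, toPv, dot3, cross3, Fin.sum_univ_three, smul_eq_mul] <;> ring

def CgL (Λ : Pv) : Pv →L[ℂ] Pv := (IsLinearMap.mk' _ (Cg_linear Λ)).toContinuousLinearMap
def LrotL (Λ : Pv) : CPt →L[ℂ] CPt := (IsLinearMap.mk' _ (Lrot_linear Λ)).toContinuousLinearMap

lemma cpd_fst_s19 {F : CPt → Pv} {f' : CPt →L[ℂ] Pv} {x : CPt}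
    (h : HasFDerivAt F f' x) (i : Fin 4) :
    cpd i (fun y => (F y).1) x = (f' (Pi.single i 1)).1 := by
  rw [cpd, h.fst.fderiv]; rfl

lemma cpd_snd_s19 {F : CPt → Pv} {f' : CPt →L[ℂ] Pv} {x : CPt}
    (h : HasFDerivAt F f' x) (i : Fin 4) (j : Fin 3) :
    cpd i (fun y => (F y).2 j) x = (f' (Pi.single i 1)).2 j := by
  have h2 : HasFDerivAt (fun y => (F y).2)
      ((ContinuousLinearMap.snd ℂ ℂ Vec3).comp f') x := h.snd
  have h3 : HasFDerivAt (fun y => (F y).2 j)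
      ((ContinuousLinearMap.proj (R := ℂ) (φ := fun _ : Fin 3 => ℂ) j).comp
        ((ContinuousLinearMap.snd ℂ ℂ Vec3).comp f')) x :=
    (ContinuousLinearMap.proj (R := ℂ) (φ := fun _ : Fin 3 => ℂ) j).hasFDerivAt.comp x h2
  rw [cpd, h3.fderiv]; rfl

lemma fderiv_apply_sum (A : CPt → Pv) (p : CPt) (v : CPt) :
    fderiv ℂ A p v = ∑ ν : Fin 4, v ν • fderiv ℂ A p (Pi.single ν 1) := by
  have hv : v = ∑ ν : Fin 4, v ν • (Pi.single ν 1 : CPt) := by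
    funext μ
    simp [Finset.sum_apply, Pi.single_apply]
  conv_lhs => rw [hv]
  rw [map_sum]
  simp only [map_smul]

@[simp] lemma pmul_fst (A B : Pv) : (pmul A B).1 = A.1 * B.1 + dot3 A.2 B.2 := rfl
@[simp] lemma pmul_snd (A B : Pv) (j : Fin 3) :
    (pmul A B).2 j = A.1 * B.2 j + B.1 * A.2 j + Complex.I * cross3 A.2 B.2 j := rfl
@[simp] lemma revP_fst (A : Pv) : (revP A).1 = A.1 := rfl
@[simp] lemma revP_snd (A : Pv) (j : Fin 3) : (revP A).2 j = -A.2 j := rfl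
@[simp] lemma vec3_at0 (a b c : ℂ) : ![a,b,c] 0 = a := rfl
@[simp] lemma vec3_at1 (a b c : ℂ) : ![a,b,c] 1 = b := rfl
@[simp] lemma vec3_at2 (a b c : ℂ) : ![a,b,c] 2 = c := rfl
@[simp] lemma cross3_0 (a b : Vec3) : cross3 a b 0 = a 1 * b 2 - a 2 * b 1 := rfl
@[simp] lemma cross3_1 (a b : Vec3) : cross3 a b 1 = a 2 * b 0 - a 0 * b 2 := rfl
@[simp] lemma cross3_2 (a b : Vec3) : cross3 a b 2 = a 0 * b 1 - a 1 * b 0 := rfl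
@[simp] lemma toPv_fst (y : CPt) : (toPv y).1 = y 0 := rfl
@[simp] lemma toPv_snd (y : CPt) (i : Fin 3) : (toPv y).2 i = y i.succ := rfl

set_option maxHeartbeats 4000000 in
set_option maxRecDepth 8000 in
theorem rotation_covariance (Λ : Pv) (hΛ : detP Λ = 1)
    (A B : CPt → Pv) (hA : Differentiable ℂ A) (hB : Differentiable ℂ B)
    (hAB : ∀ x : CPt, Dc A x = B x) :
    ∀ x : CPt,
      Dc (fun y => pmul (pmul Λ (A (ofPv (pmul (pmul (revP Λ) (toPv y)) Λ)))) (revP Λ)) x =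
        pmul (pmul Λ (B (ofPv (pmul (pmul (revP Λ) (toPv x)) Λ)))) (revP Λ) := by
  intro x
  have hA'd : HasFDerivAt
      (fun y => pmul (pmul Λ (A (ofPv (pmul (pmul (revP Λ) (toPv y)) Λ)))) (revP Λ))
      ((CgL Λ).comp ((fderiv ℂ A (LrotL Λ x)).comp (LrotL Λ))) x :=
    (CgL Λ).hasFDerivAt.comp x
      (((hA ((LrotL Λ) x)).hasFDerivAt).comp x (LrotL Λ).hasFDerivAt)
  have Efst : ∀ i : Fin 4,
      cpd i (fun y => (pmul (pmul Λ (A (ofPv (pmul (pmul (revP Λ) (toPv y)) Λ)))) (revP Λ)).1) x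
        = (Cg Λ (∑ ν : Fin 4, Lrot Λ (Pi.single i 1) ν •
            fderiv ℂ A (LrotL Λ x) (Pi.single ν 1))).1 := by
    intro i
    have h := cpd_fst_s19 hA'd i
    rw [h]
    show (Cg Λ (fderiv ℂ A (LrotL Λ x) (Lrot Λ (Pi.single i 1)))).1 = _
    rw [fderiv_apply_sum]
  have Esnd : ∀ (i : Fin 4) (j : Fin 3),
      cpd i (fun y => (pmul (pmul Λ (A (ofPv (pmul (pmul (revP Λ) (toPv y)) Λ)))) (revP Λ)).2 j) x
        = (Cg Λ (∑ ν : Fin 4, Lrot Λ (Pi.single i 1) ν •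
            fderiv ℂ A (LrotL Λ x) (Pi.single ν 1))).2 j := by
    intro i j
    have h := cpd_snd_s19 hA'd i j
    rw [h]
    show (Cg Λ (fderiv ℂ A (LrotL Λ x) (Lrot Λ (Pi.single i 1)))).2 j = _
    rw [fderiv_apply_sum]
  have Rfst : ∀ ν : Fin 4,
      cpd ν (fun y => (A y).1) (LrotL Λ x)
        = (fderiv ℂ A (LrotL Λ x) (Pi.single ν 1)).1 :=
    fun ν => cpd_fst_s19 (hA _).hasFDerivAt ν
  have Rsnd : ∀ (ν : Fin 4) (j : Fin 3),
      cpd ν (fun y => (A y).2 j) (LrotL Λ x)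
        = (fderiv ℂ A (LrotL Λ x) (Pi.single ν 1)).2 j :=
    fun ν j => cpd_snd_s19 (hA _).hasFDerivAt ν j
  have hgoalR : ofPv (pmul (pmul (revP Λ) (toPv x)) Λ) = LrotL Λ x := rfl
  rw [hgoalR, ← hAB]
  have hd : Λ.1 ^ 2 - (Λ.2 0 ^ 2 + Λ.2 1 ^ 2 + Λ.2 2 ^ 2) = 1 := by
    simpa [detP, dot3, Fin.sum_univ_three, sq] using hΛ
  refine Prod.ext ?_ (funext fun j => ?_)
  · simp only [Dc, cdiv3, cgrad3, ccurl3, Fin.sum_univ_three, fs0, fs1, fs2,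
      Efst, Esnd, Rfst, Rsnd]
    simp only [Cg, Lrot, pmul_fst, pmul_snd, revP_fst, revP_snd, cross3_0, cross3_1,
      vec3_at0, vec3_at1, vec3_at2, cross3_2, toPv_fst, toPv_snd, ofPv0, ofPv1, ofPv2, ofPv3, dot3,
      Fin.sum_univ_three, Fin.sum_univ_four, Prod.fst_sum, Prod.snd_sum,
      Finset.sum_apply, Prod.smul_fst, Prod.smul_snd, Pi.smul_apply, smul_eq_mul,
      Pi.single_apply, fs0, fs1, fs2, Fin.reduceEq, reduceIte, if_true, if_false,
      Prod.fst_add, Prod.snd_add, Pi.add_apply]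
    generalize ((fderiv ℂ A ((LrotL Λ) x)) (Pi.single (0:Fin 4) 1)) = F0
    generalize ((fderiv ℂ A ((LrotL Λ) x)) (Pi.single (1:Fin 4) 1)) = F1
    generalize ((fderiv ℂ A ((LrotL Λ) x)) (Pi.single (2:Fin 4) 1)) = F2
    generalize ((fderiv ℂ A ((LrotL Λ) x)) (Pi.single (3:Fin 4) 1)) = F3
    linear_combination ((1:ℂ)*F0.1*Λ.1*Λ.1 + (-1:ℂ)*F0.1*Λ.2 0*Λ.2 0 + (-1:ℂ)*F0.1*Λ.2 1*Λ.2 1 + (-1:ℂ)*F0.1*Λ.2 2*Λ.2 2 + (1:ℂ)*F1.2 0*Λ.1*Λ.1 + (-1:ℂ)*F1.2 0*Λ.2 0*Λ.2 0 + (-1:ℂ)*F1.2 0*Λ.2 1*Λ.2 1 + (-1:ℂ)*F1.2 0*Λ.2 2*Λ.2 2 + (1:ℂ)*F2.2 1*Λ.1*Λ.1 + (-1:ℂ)*F2.2 1*Λ.2 0*Λ.2 0 + (-1:ℂ)*F2.2 1*Λ.2 1*Λ.2 1 + (-1:ℂ)*F2.2 1*Λ.2 2*Λ.2 2 + (1:ℂ)*F3.2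 2*Λ.1*Λ.1 + (-1:ℂ)*F3.2 2*Λ.2 0*Λ.2 0 + (-1:ℂ)*F3.2 2*Λ.2 1*Λ.2 1 + (-1:ℂ)*F3.2 2*Λ.2 2*Λ.2 2) * hd + ((2:ℂ)*Λ.1*Λ.1*F1.2 0*Λ.2 1*Λ.2 1 + (2:ℂ)*Λ.1*Λ.1*F1.2 0*Λ.2 2*Λ.2 2 + (-2:ℂ)*Λ.1*Λ.1*F1.2 1*Λ.2 0*Λ.2 1 + (-2:ℂ)*Λ.1*Λ.1*F1.2 2*Λ.2 0*Λ.2 2 + (-2:ℂ)*Λ.1*Λ.1*F2.2 0*Λ.2 0*Λ.2 1 + (2:ℂ)*Λ.1*Λ.1*F2.2 1*Λ.2 0*Λ.2 0 + (2:ℂ)*Λ.1*Λ.1*F2.2 1*Λ.2 2*Λ.2 2 + (-2:ℂ)*Λ.1*Λ.1*F2.2 2*Λ.2 1*Λ.2 2 + (-2:ℂ)*Λ.1*Λ.1*F3.2 0*Λ.2 0*Λ.2 2 + (-2:ℂ)*Λ.1*Λ.1*F3.2 1*Λ.2 1*Λ.2 2 + (2:ℂ)*Λ.1*Λ.1*F3.2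 2*Λ.2 0*Λ.2 0 + (2:ℂ)*Λ.1*Λ.1*F3.2 2*Λ.2 1*Λ.2 1 + (-1:ℂ)*F1.2 0*Λ.2 0*Λ.2 0*Λ.2 1*Λ.2 1 + (1:ℂ)*F1.2 0*Λ.2 0*Λ.2 0*Λ.2 1*Λ.2 1*Complex.I*Complex.I + (-1:ℂ)*F1.2 0*Λ.2 0*Λ.2 0*Λ.2 2*Λ.2 2 + (1:ℂ)*F1.2 0*Λ.2 0*Λ.2 0*Λ.2 2*Λ.2 2*Complex.I*Complex.I + (-1:ℂ)*F1.2 0*Λ.2 1*Λ.2 1*Λ.2 1*Λ.2 1 + (1:ℂ)*F1.2 0*Λ.2 1*Λ.2 1*Λ.2 1*Λ.2 1*Complex.I*Complex.I + (-2:ℂ)*F1.2 0*Λ.2 1*Λ.2 1*Λ.2 2*Λ.2 2 + (2:ℂ)*F1.2 0*Λ.2 1*Λ.2 1*Λ.2 2*Λ.2 2*Complex.I*Complex.I + (-1:ℂ)*F1.2 0*Λ.2 2*Λ.2 2*Λ.2 2*Λ.2 2 + (1:ℂ)*F1.2 0*Λ.2 2*Λ.2 2*Λ.2 2*Λ.2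 2*Complex.I*Complex.I + (1:ℂ)*F1.2 1*Λ.2 0*Λ.2 0*Λ.2 0*Λ.2 1 + (-1:ℂ)*F1.2 1*Λ.2 0*Λ.2 0*Λ.2 0*Λ.2 1*Complex.I*Complex.I + (1:ℂ)*F1.2 1*Λ.2 0*Λ.2 1*Λ.2 1*Λ.2 1 + (-1:ℂ)*F1.2 1*Λ.2 0*Λ.2 1*Λ.2 1*Λ.2 1*Complex.I*Complex.I + (1:ℂ)*F1.2 1*Λ.2 0*Λ.2 1*Λ.2 2*Λ.2 2 + (-1:ℂ)*F1.2 1*Λ.2 0*Λ.2 1*Λ.2 2*Λ.2 2*Complex.I*Complex.I + (1:ℂ)*F1.2 2*Λ.2 0*Λ.2 0*Λ.2 0*Λ.2 2 + (-1:ℂ)*F1.2 2*Λ.2 0*Λ.2 0*Λ.2 0*Λ.2 2*Complex.I*Complex.I + (1:ℂ)*F1.2 2*Λ.2 0*Λ.2 1*Λ.2 1*Λ.2 2 + (-1:ℂ)*F1.2 2*Λ.2 0*Λ.2 1*Λ.2 1*Λ.2 2*Complex.I*Complex.I + (1:ℂ)*F1.2 2*Λ.2 0*Λ.2 2*Λ.2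 2*Λ.2 2 + (-1:ℂ)*F1.2 2*Λ.2 0*Λ.2 2*Λ.2 2*Λ.2 2*Complex.I*Complex.I + (1:ℂ)*F2.2 0*Λ.2 0*Λ.2 0*Λ.2 0*Λ.2 1 + (-1:ℂ)*F2.2 0*Λ.2 0*Λ.2 0*Λ.2 0*Λ.2 1*Complex.I*Complex.I + (1:ℂ)*F2.2 0*Λ.2 0*Λ.2 1*Λ.2 1*Λ.2 1 + (-1:ℂ)*F2.2 0*Λ.2 0*Λ.2 1*Λ.2 1*Λ.2 1*Complex.I*Complex.I + (1:ℂ)*F2.2 0*Λ.2 0*Λ.2 1*Λ.2 2*Λ.2 2 + (-1:ℂ)*F2.2 0*Λ.2 0*Λ.2 1*Λ.2 2*Λ.2 2*Complex.I*Complex.I + (-1:ℂ)*F2.2 1*Λ.2 0*Λ.2 0*Λ.2 0*Λ.2 0 + (1:ℂ)*F2.2 1*Λ.2 0*Λ.2 0*Λ.2 0*Λ.2 0*Complex.I*Complex.I + (-1:ℂ)*F2.2 1*Λ.2 0*Λ.2 0*Λ.2 1*Λ.2 1 + (1:ℂ)*F2.2 1*Λ.2 0*Λ.2 0*Λ.2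 1*Λ.2 1*Complex.I*Complex.I + (-2:ℂ)*F2.2 1*Λ.2 0*Λ.2 0*Λ.2 2*Λ.2 2 + (2:ℂ)*F2.2 1*Λ.2 0*Λ.2 0*Λ.2 2*Λ.2 2*Complex.I*Complex.I + (-1:ℂ)*F2.2 1*Λ.2 1*Λ.2 1*Λ.2 2*Λ.2 2 + (1:ℂ)*F2.2 1*Λ.2 1*Λ.2 1*Λ.2 2*Λ.2 2*Complex.I*Complex.I + (-1:ℂ)*F2.2 1*Λ.2 2*Λ.2 2*Λ.2 2*Λ.2 2 + (1:ℂ)*F2.2 1*Λ.2 2*Λ.2 2*Λ.2 2*Λ.2 2*Complex.I*Complex.I + (1:ℂ)*F2.2 2*Λ.2 0*Λ.2 0*Λ.2 1*Λ.2 2 + (-1:ℂ)*F2.2 2*Λ.2 0*Λ.2 0*Λ.2 1*Λ.2 2*Complex.I*Complex.I + (1:ℂ)*F2.2 2*Λ.2 1*Λ.2 1*Λ.2 1*Λ.2 2 + (-1:ℂ)*F2.2 2*Λ.2 1*Λ.2 1*Λ.2 1*Λ.2 2*Complex.I*Complex.I + (1:ℂ)*F2.2 2*Λ.2 1*Λ.2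 2*Λ.2 2*Λ.2 2 + (-1:ℂ)*F2.2 2*Λ.2 1*Λ.2 2*Λ.2 2*Λ.2 2*Complex.I*Complex.I + (1:ℂ)*F3.2 0*Λ.2 0*Λ.2 0*Λ.2 0*Λ.2 2 + (-1:ℂ)*F3.2 0*Λ.2 0*Λ.2 0*Λ.2 0*Λ.2 2*Complex.I*Complex.I + (1:ℂ)*F3.2 0*Λ.2 0*Λ.2 1*Λ.2 1*Λ.2 2 + (-1:ℂ)*F3.2 0*Λ.2 0*Λ.2 1*Λ.2 1*Λ.2 2*Complex.I*Complex.I + (1:ℂ)*F3.2 0*Λ.2 0*Λ.2 2*Λ.2 2*Λ.2 2 + (-1:ℂ)*F3.2 0*Λ.2 0*Λ.2 2*Λ.2 2*Λ.2 2*Complex.I*Complex.I + (1:ℂ)*F3.2 1*Λ.2 0*Λ.2 0*Λ.2 1*Λ.2 2 + (-1:ℂ)*F3.2 1*Λ.2 0*Λ.2 0*Λ.2 1*Λ.2 2*Complex.I*Complex.I + (1:ℂ)*F3.2 1*Λ.2 1*Λ.2 1*Λ.2 1*Λ.2 2 + (-1:ℂ)*F3.2 1*Λ.2 1*Λ.2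 1*Λ.2 1*Λ.2 2*Complex.I*Complex.I + (1:ℂ)*F3.2 1*Λ.2 1*Λ.2 2*Λ.2 2*Λ.2 2 + (-1:ℂ)*F3.2 1*Λ.2 1*Λ.2 2*Λ.2 2*Λ.2 2*Complex.I*Complex.I + (-1:ℂ)*F3.2 2*Λ.2 0*Λ.2 0*Λ.2 0*Λ.2 0 + (1:ℂ)*F3.2 2*Λ.2 0*Λ.2 0*Λ.2 0*Λ.2 0*Complex.I*Complex.I + (-2:ℂ)*F3.2 2*Λ.2 0*Λ.2 0*Λ.2 1*Λ.2 1 + (2:ℂ)*F3.2 2*Λ.2 0*Λ.2 0*Λ.2 1*Λ.2 1*Complex.I*Complex.I + (-1:ℂ)*F3.2 2*Λ.2 0*Λ.2 0*Λ.2 2*Λ.2 2 + (1:ℂ)*F3.2 2*Λ.2 0*Λ.2 0*Λ.2 2*Λ.2 2*Complex.I*Complex.I + (-1:ℂ)*F3.2 2*Λ.2 1*Λ.2 1*Λ.2 1*Λ.2 1 + (1:ℂ)*F3.2 2*Λ.2 1*Λ.2 1*Λ.2 1*Λ.2 1*Complex.I*Complex.I + (-1:ℂ)*F3.2 2*Λ.2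 1*Λ.2 1*Λ.2 2*Λ.2 2 + (1:ℂ)*F3.2 2*Λ.2 1*Λ.2 1*Λ.2 2*Λ.2 2*Complex.I*Complex.I) * Complex.I_mul_I
  · fin_cases j
    · simp only [finmk0, finmk1, finmk2, Dc, cdiv3, cgrad3, ccurl3, Fin.sum_univ_three,
        fs0, fs1, fs2, Efst, Esnd, Rfst, Rsnd]
      simp (config := { maxSteps := 10000000 }) only [Cg, Lrot, pmul_fst, pmul_snd, revP_fst, revP_snd, cross3_0, cross3_1,
        vec3_at0, vec3_at1, vec3_at2, cross3_2, toPv_fst, toPv_snd, ofPv0, ofPv1, ofPv2, ofPv3, dot3,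
        Fin.sum_univ_three, Fin.sum_univ_four, Prod.fst_sum, Prod.snd_sum,
        Finset.sum_apply, Prod.smul_fst, Prod.smul_snd, Pi.smul_apply, smul_eq_mul,
        Pi.single_apply, fs0, fs1, fs2, Fin.reduceEq, reduceIte, if_true, if_false,
        Prod.fst_add, Prod.snd_add, Pi.add_apply]
      generalize ((fderiv ℂ A ((LrotL Λ) x)) (Pi.single (0:Fin 4) 1)) = F0
      generalize ((fderiv ℂ A ((LrotL Λ) x)) (Pi.single (1:Fin 4) 1)) = F1
      generalize ((fderiv ℂ A ((LrotL Λ) x)) (Pi.single (2:Fin 4) 1)) = F2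
      generalize ((fderiv ℂ A ((LrotL Λ) x)) (Pi.single (3:Fin 4) 1)) = F3
      linear_combination ((1:ℂ)*F0.2 0*Λ.1*Λ.1 + (-1:ℂ)*F0.2 0*Λ.2 0*Λ.2 0 + (1:ℂ)*F0.2 0*Λ.2 1*Λ.2 1 + (1:ℂ)*F0.2 0*Λ.2 2*Λ.2 2 + (-2:ℂ)*F0.2 1*Complex.I*Λ.2 2*Λ.1 + (-2:ℂ)*F0.2 1*Λ.2 0*Λ.2 1 + (2:ℂ)*F0.2 2*Complex.I*Λ.2 1*Λ.1 + (-2:ℂ)*F0.2 2*Λ.2 0*Λ.2 2 + (1:ℂ)*F1.1*Λ.1*Λ.1 + (-1:ℂ)*F1.1*Λ.2 0*Λ.2 0 + (1:ℂ)*F1.1*Λ.2 1*Λ.2 1 + (1:ℂ)*F1.1*Λ.2 2*Λ.2 2 + (-2:ℂ)*F1.2 1*Complex.I*Λ.2 0*Λ.2 2 + (-2:ℂ)*F1.2 1*Λ.2 1*Λ.1 + (2:ℂ)*F1.2 2*Complex.I*Λ.2 0*Λ.2 1 + (-2:ℂ)*F1.2 2*Λ.2 2*Λ.1 + (-2:ℂ)*F2.1*Complex.I*Λ.2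 2*Λ.1 + (-2:ℂ)*F2.1*Λ.2 0*Λ.2 1 + (2:ℂ)*F2.2 0*Complex.I*Λ.2 0*Λ.2 2 + (2:ℂ)*F2.2 0*Λ.2 1*Λ.1 + (1:ℂ)*F2.2 2*Complex.I*Λ.1*Λ.1 + (-1:ℂ)*F2.2 2*Complex.I*Λ.2 0*Λ.2 0 + (1:ℂ)*F2.2 2*Complex.I*Λ.2 1*Λ.2 1 + (1:ℂ)*F2.2 2*Complex.I*Λ.2 2*Λ.2 2 + (2:ℂ)*F3.1*Complex.I*Λ.2 1*Λ.1 + (-2:ℂ)*F3.1*Λ.2 0*Λ.2 2 + (-2:ℂ)*F3.2 0*Complex.I*Λ.2 0*Λ.2 1 + (2:ℂ)*F3.2 0*Λ.2 2*Λ.1 + (-1:ℂ)*F3.2 1*Complex.I*Λ.1*Λ.1 + (1:ℂ)*F3.2 1*Complex.I*Λ.2 0*Λ.2 0 + (-1:ℂ)*F3.2 1*Complex.I*Λ.2 1*Λ.2 1 + (-1:ℂ)*F3.2 1*Complex.I*Λ.2 2*Λ.2 2) * hd + ((2:ℂ)*Λ.1*Λ.1*Λ.1*F1.2 1*Λ.2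 1 + (2:ℂ)*Λ.1*Λ.1*Λ.1*F1.2 2*Λ.2 2 + (-2:ℂ)*Λ.1*Λ.1*Λ.1*F2.2 0*Λ.2 1 + (-2:ℂ)*Λ.1*Λ.1*Λ.1*F3.2 0*Λ.2 2 + (-1:ℂ)*Λ.1*Λ.1*F0.2 0*Λ.2 1*Λ.2 1 + (-1:ℂ)*Λ.1*Λ.1*F0.2 0*Λ.2 2*Λ.2 2 + (1:ℂ)*Λ.1*Λ.1*F0.2 1*Λ.2 0*Λ.2 1 + (1:ℂ)*Λ.1*Λ.1*F0.2 2*Λ.2 0*Λ.2 2 + (-1:ℂ)*Λ.1*Λ.1*F1.1*Λ.2 1*Λ.2 1 + (-1:ℂ)*Λ.1*Λ.1*F1.1*Λ.2 2*Λ.2 2 + (3:ℂ)*Λ.1*Λ.1*F1.2 1*Λ.2 0*Λ.2 2*Complex.I + (-3:ℂ)*Λ.1*Λ.1*F1.2 2*Λ.2 0*Λ.2 1*Complex.I + (1:ℂ)*Λ.1*Λ.1*F2.1*Λ.2 0*Λ.2 1 + (-3:ℂ)*Λ.1*Λ.1*F2.2 0*Λ.2 0*Λ.2 2*Complex.I +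 (2:ℂ)*Λ.1*Λ.1*F2.2 2*Λ.2 0*Λ.2 0*Complex.I + (-1:ℂ)*Λ.1*Λ.1*F2.2 2*Λ.2 1*Λ.2 1*Complex.I + (-1:ℂ)*Λ.1*Λ.1*F2.2 2*Λ.2 2*Λ.2 2*Complex.I + (1:ℂ)*Λ.1*Λ.1*F3.1*Λ.2 0*Λ.2 2 + (3:ℂ)*Λ.1*Λ.1*F3.2 0*Λ.2 0*Λ.2 1*Complex.I + (-2:ℂ)*Λ.1*Λ.1*F3.2 1*Λ.2 0*Λ.2 0*Complex.I + (1:ℂ)*Λ.1*Λ.1*F3.2 1*Λ.2 1*Λ.2 1*Complex.I + (1:ℂ)*Λ.1*Λ.1*F3.2 1*Λ.2 2*Λ.2 2*Complex.I + (-2:ℂ)*Λ.1*F1.2 1*Λ.2 0*Λ.2 0*Λ.2 1 + (-2:ℂ)*Λ.1*F1.2 1*Λ.2 1 + (-2:ℂ)*Λ.1*F1.2 1*Λ.2 1*Λ.2 1*Λ.2 1 + (-2:ℂ)*Λ.1*F1.2 1*Λ.2 1*Λ.2 2*Λ.2 2 + (-2:ℂ)*Λ.1*F1.2 2*Λ.2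 0*Λ.2 0*Λ.2 2 + (-2:ℂ)*Λ.1*F1.2 2*Λ.2 1*Λ.2 1*Λ.2 2 + (-2:ℂ)*Λ.1*F1.2 2*Λ.2 2 + (-2:ℂ)*Λ.1*F1.2 2*Λ.2 2*Λ.2 2*Λ.2 2 + (2:ℂ)*Λ.1*F2.2 0*Λ.2 0*Λ.2 0*Λ.2 1 + (2:ℂ)*Λ.1*F2.2 0*Λ.2 1 + (2:ℂ)*Λ.1*F2.2 0*Λ.2 1*Λ.2 1*Λ.2 1 + (2:ℂ)*Λ.1*F2.2 0*Λ.2 1*Λ.2 2*Λ.2 2 + (2:ℂ)*Λ.1*F3.2 0*Λ.2 0*Λ.2 0*Λ.2 2 + (2:ℂ)*Λ.1*F3.2 0*Λ.2 1*Λ.2 1*Λ.2 2 + (2:ℂ)*Λ.1*F3.2 0*Λ.2 2 + (2:ℂ)*Λ.1*F3.2 0*Λ.2 2*Λ.2 2*Λ.2 2 + (1:ℂ)*F0.2 0*Λ.2 0*Λ.2 0*Λ.2 1*Λ.2 1 + (1:ℂ)*F0.2 0*Λ.2 0*Λ.2 0*Λ.2 2*Λ.2 2 + (1:ℂ)*F0.2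 0*Λ.2 1*Λ.2 1 + (1:ℂ)*F0.2 0*Λ.2 1*Λ.2 1*Λ.2 1*Λ.2 1 + (2:ℂ)*F0.2 0*Λ.2 1*Λ.2 1*Λ.2 2*Λ.2 2 + (1:ℂ)*F0.2 0*Λ.2 2*Λ.2 2 + (1:ℂ)*F0.2 0*Λ.2 2*Λ.2 2*Λ.2 2*Λ.2 2 + (-1:ℂ)*F0.2 1*Λ.2 0*Λ.2 0*Λ.2 0*Λ.2 1 + (-1:ℂ)*F0.2 1*Λ.2 0*Λ.2 1 + (-1:ℂ)*F0.2 1*Λ.2 0*Λ.2 1*Λ.2 1*Λ.2 1 + (-1:ℂ)*F0.2 1*Λ.2 0*Λ.2 1*Λ.2 2*Λ.2 2 + (-1:ℂ)*F0.2 2*Λ.2 0*Λ.2 0*Λ.2 0*Λ.2 2 + (-1:ℂ)*F0.2 2*Λ.2 0*Λ.2 1*Λ.2 1*Λ.2 2 + (-1:ℂ)*F0.2 2*Λ.2 0*Λ.2 2 + (-1:ℂ)*F0.2 2*Λ.2 0*Λ.2 2*Λ.2 2*Λ.2 2 + (1:ℂ)*F1.1*Λ.2 0*Λ.2 0*Λ.2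 1*Λ.2 1 + (1:ℂ)*F1.1*Λ.2 0*Λ.2 0*Λ.2 2*Λ.2 2 + (1:ℂ)*F1.1*Λ.2 1*Λ.2 1 + (1:ℂ)*F1.1*Λ.2 1*Λ.2 1*Λ.2 1*Λ.2 1 + (2:ℂ)*F1.1*Λ.2 1*Λ.2 1*Λ.2 2*Λ.2 2 + (1:ℂ)*F1.1*Λ.2 2*Λ.2 2 + (1:ℂ)*F1.1*Λ.2 2*Λ.2 2*Λ.2 2*Λ.2 2 + (-2:ℂ)*F1.2 1*Λ.2 0*Λ.2 0*Λ.2 0*Λ.2 2*Complex.I + (1:ℂ)*F1.2 1*Λ.2 0*Λ.2 0*Λ.2 0*Λ.2 2*Complex.I*Complex.I*Complex.I + (-2:ℂ)*F1.2 1*Λ.2 0*Λ.2 1*Λ.2 1*Λ.2 2*Complex.I + (1:ℂ)*F1.2 1*Λ.2 0*Λ.2 1*Λ.2 1*Λ.2 2*Complex.I*Complex.I*Complex.I + (-1:ℂ)*F1.2 1*Λ.2 0*Λ.2 2*Complex.I + (-2:ℂ)*F1.2 1*Λ.2 0*Λ.2 2*Λ.2 2*Λ.2 2*Complex.I + (1:ℂ)*F1.2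 1*Λ.2 0*Λ.2 2*Λ.2 2*Λ.2 2*Complex.I*Complex.I*Complex.I + (2:ℂ)*F1.2 2*Λ.2 0*Λ.2 0*Λ.2 0*Λ.2 1*Complex.I + (-1:ℂ)*F1.2 2*Λ.2 0*Λ.2 0*Λ.2 0*Λ.2 1*Complex.I*Complex.I*Complex.I + (1:ℂ)*F1.2 2*Λ.2 0*Λ.2 1*Complex.I + (2:ℂ)*F1.2 2*Λ.2 0*Λ.2 1*Λ.2 1*Λ.2 1*Complex.I + (-1:ℂ)*F1.2 2*Λ.2 0*Λ.2 1*Λ.2 1*Λ.2 1*Complex.I*Complex.I*Complex.I + (2:ℂ)*F1.2 2*Λ.2 0*Λ.2 1*Λ.2 2*Λ.2 2*Complex.I + (-1:ℂ)*F1.2 2*Λ.2 0*Λ.2 1*Λ.2 2*Λ.2 2*Complex.I*Complex.I*Complex.I + (-1:ℂ)*F2.1*Λ.2 0*Λ.2 0*Λ.2 0*Λ.2 1 + (-1:ℂ)*F2.1*Λ.2 0*Λ.2 1 + (-1:ℂ)*F2.1*Λ.2 0*Λ.2 1*Λ.2 1*Λ.2 1 + (-1:ℂ)*F2.1*Λ.2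 0*Λ.2 1*Λ.2 2*Λ.2 2 + (2:ℂ)*F2.2 0*Λ.2 0*Λ.2 0*Λ.2 0*Λ.2 2*Complex.I + (-1:ℂ)*F2.2 0*Λ.2 0*Λ.2 0*Λ.2 0*Λ.2 2*Complex.I*Complex.I*Complex.I + (2:ℂ)*F2.2 0*Λ.2 0*Λ.2 1*Λ.2 1*Λ.2 2*Complex.I + (-1:ℂ)*F2.2 0*Λ.2 0*Λ.2 1*Λ.2 1*Λ.2 2*Complex.I*Complex.I*Complex.I + (1:ℂ)*F2.2 0*Λ.2 0*Λ.2 2*Complex.I + (2:ℂ)*F2.2 0*Λ.2 0*Λ.2 2*Λ.2 2*Λ.2 2*Complex.I + (-1:ℂ)*F2.2 0*Λ.2 0*Λ.2 2*Λ.2 2*Λ.2 2*Complex.I*Complex.I*Complex.I + (-1:ℂ)*F2.2 2*Λ.2 0*Λ.2 0*Λ.2 0*Λ.2 0*Complex.I + (1:ℂ)*F2.2 2*Λ.2 0*Λ.2 0*Λ.2 0*Λ.2 0*Complex.I*Complex.I*Complex.I + (1:ℂ)*F2.2 2*Λ.2 0*Λ.2 0*Λ.2 1*Λ.2 1*Complex.I*Complex.I*Complex.I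 + (1:ℂ)*F2.2 2*Λ.2 0*Λ.2 0*Λ.2 2*Λ.2 2*Complex.I*Complex.I*Complex.I + (1:ℂ)*F2.2 2*Λ.2 1*Λ.2 1*Complex.I + (1:ℂ)*F2.2 2*Λ.2 1*Λ.2 1*Λ.2 1*Λ.2 1*Complex.I + (2:ℂ)*F2.2 2*Λ.2 1*Λ.2 1*Λ.2 2*Λ.2 2*Complex.I + (1:ℂ)*F2.2 2*Λ.2 2*Λ.2 2*Complex.I + (1:ℂ)*F2.2 2*Λ.2 2*Λ.2 2*Λ.2 2*Λ.2 2*Complex.I + (-1:ℂ)*F3.1*Λ.2 0*Λ.2 0*Λ.2 0*Λ.2 2 + (-1:ℂ)*F3.1*Λ.2 0*Λ.2 1*Λ.2 1*Λ.2 2 + (-1:ℂ)*F3.1*Λ.2 0*Λ.2 2 + (-1:ℂ)*F3.1*Λ.2 0*Λ.2 2*Λ.2 2*Λ.2 2 + (-2:ℂ)*F3.2 0*Λ.2 0*Λ.2 0*Λ.2 0*Λ.2 1*Complex.I + (1:ℂ)*F3.2 0*Λ.2 0*Λ.2 0*Λ.2 0*Λ.2 1*Complex.I*Complex.I*Complex.I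 + (-1:ℂ)*F3.2 0*Λ.2 0*Λ.2 1*Complex.I + (-2:ℂ)*F3.2 0*Λ.2 0*Λ.2 1*Λ.2 1*Λ.2 1*Complex.I + (1:ℂ)*F3.2 0*Λ.2 0*Λ.2 1*Λ.2 1*Λ.2 1*Complex.I*Complex.I*Complex.I + (-2:ℂ)*F3.2 0*Λ.2 0*Λ.2 1*Λ.2 2*Λ.2 2*Complex.I + (1:ℂ)*F3.2 0*Λ.2 0*Λ.2 1*Λ.2 2*Λ.2 2*Complex.I*Complex.I*Complex.I + (1:ℂ)*F3.2 1*Λ.2 0*Λ.2 0*Λ.2 0*Λ.2 0*Complex.I + (-1:ℂ)*F3.2 1*Λ.2 0*Λ.2 0*Λ.2 0*Λ.2 0*Complex.I*Complex.I*Complex.I + (-1:ℂ)*F3.2 1*Λ.2 0*Λ.2 0*Λ.2 1*Λ.2 1*Complex.I*Complex.I*Complex.I + (-1:ℂ)*F3.2 1*Λ.2 0*Λ.2 0*Λ.2 2*Λ.2 2*Complex.I*Complex.I*Complex.I + (-1:ℂ)*F3.2 1*Λ.2 1*Λ.2 1*Complex.I + (-1:ℂ)*F3.2 1*Λ.2 1*Λ.2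 1*Λ.2 1*Λ.2 1*Complex.I + (-2:ℂ)*F3.2 1*Λ.2 1*Λ.2 1*Λ.2 2*Λ.2 2*Complex.I + (-1:ℂ)*F3.2 1*Λ.2 2*Λ.2 2*Complex.I + (-1:ℂ)*F3.2 1*Λ.2 2*Λ.2 2*Λ.2 2*Λ.2 2*Complex.I) * Complex.I_mul_I
    · simp only [finmk0, finmk1, finmk2, Dc, cdiv3, cgrad3, ccurl3, Fin.sum_univ_three,
        fs0, fs1, fs2, Efst, Esnd, Rfst, Rsnd]
      simp (config := { maxSteps := 10000000 }) only [Cg, Lrot, pmul_fst, pmul_snd, revP_fst, revP_snd, cross3_0, cross3_1,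
        vec3_at0, vec3_at1, vec3_at2, cross3_2, toPv_fst, toPv_snd, ofPv0, ofPv1, ofPv2, ofPv3, dot3,
        Fin.sum_univ_three, Fin.sum_univ_four, Prod.fst_sum, Prod.snd_sum,
        Finset.sum_apply, Prod.smul_fst, Prod.smul_snd, Pi.smul_apply, smul_eq_mul,
        Pi.single_apply, fs0, fs1, fs2, Fin.reduceEq, reduceIte, if_true, if_false,
        Prod.fst_add, Prod.snd_add, Pi.add_apply]
      generalize ((fderiv ℂ A ((LrotL Λ) x)) (Pi.single (0:Fin 4) 1)) = F0
      generalize ((fderiv ℂ A ((LrotL Λ) x)) (Pi.single (1:Fin 4) 1)) = F1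
      generalize ((fderiv ℂ A ((LrotL Λ) x)) (Pi.single (2:Fin 4) 1)) = F2
      generalize ((fderiv ℂ A ((LrotL Λ) x)) (Pi.single (3:Fin 4) 1)) = F3
      linear_combination ((2:ℂ)*F0.2 0*Complex.I*Λ.2 2*Λ.1 + (-2:ℂ)*F0.2 0*Λ.2 0*Λ.2 1 + (1:ℂ)*F0.2 1*Λ.1*Λ.1 + (1:ℂ)*F0.2 1*Λ.2 0*Λ.2 0 + (-1:ℂ)*F0.2 1*Λ.2 1*Λ.2 1 + (1:ℂ)*F0.2 1*Λ.2 2*Λ.2 2 + (-2:ℂ)*F0.2 2*Complex.I*Λ.2 0*Λ.1 + (-2:ℂ)*F0.2 2*Λ.2 1*Λ.2 2 + (2:ℂ)*F1.1*Complex.I*Λ.2 2*Λ.1 + (-2:ℂ)*F1.1*Λ.2 0*Λ.2 1 + (-2:ℂ)*F1.2 1*Complex.I*Λ.2 1*Λ.2 2 + (2:ℂ)*F1.2 1*Λ.2 0*Λ.1 + (-1:ℂ)*F1.2 2*Complex.I*Λ.1*Λ.1 + (-1:ℂ)*F1.2 2*Complex.I*Λ.2 0*Λ.2 0 + (1:ℂ)*F1.2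 2*Complex.I*Λ.2 1*Λ.2 1 + (-1:ℂ)*F1.2 2*Complex.I*Λ.2 2*Λ.2 2 + (1:ℂ)*F2.1*Λ.1*Λ.1 + (1:ℂ)*F2.1*Λ.2 0*Λ.2 0 + (-1:ℂ)*F2.1*Λ.2 1*Λ.2 1 + (1:ℂ)*F2.1*Λ.2 2*Λ.2 2 + (2:ℂ)*F2.2 0*Complex.I*Λ.2 1*Λ.2 2 + (-2:ℂ)*F2.2 0*Λ.2 0*Λ.1 + (-2:ℂ)*F2.2 2*Complex.I*Λ.2 0*Λ.2 1 + (-2:ℂ)*F2.2 2*Λ.2 2*Λ.1 + (-2:ℂ)*F3.1*Complex.I*Λ.2 0*Λ.1 + (-2:ℂ)*F3.1*Λ.2 1*Λ.2 2 + (1:ℂ)*F3.2 0*Complex.I*Λ.1*Λ.1 + (1:ℂ)*F3.2 0*Complex.I*Λ.2 0*Λ.2 0 + (-1:ℂ)*F3.2 0*Complex.I*Λ.2 1*Λ.2 1 + (1:ℂ)*F3.2 0*Complex.I*Λ.2 2*Λ.2 2 + (2:ℂ)*F3.2 1*Complex.I*Λ.2 0*Λ.2 1 + (2:ℂ)*F3.2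 1*Λ.2 2*Λ.1) * hd + ((-2:ℂ)*Λ.1*Λ.1*Λ.1*F1.2 1*Λ.2 0 + (2:ℂ)*Λ.1*Λ.1*Λ.1*F2.2 0*Λ.2 0 + (2:ℂ)*Λ.1*Λ.1*Λ.1*F2.2 2*Λ.2 2 + (-2:ℂ)*Λ.1*Λ.1*Λ.1*F3.2 1*Λ.2 2 + (1:ℂ)*Λ.1*Λ.1*F0.2 0*Λ.2 0*Λ.2 1 + (-1:ℂ)*Λ.1*Λ.1*F0.2 1*Λ.2 0*Λ.2 0 + (-1:ℂ)*Λ.1*Λ.1*F0.2 1*Λ.2 2*Λ.2 2 + (1:ℂ)*Λ.1*Λ.1*F0.2 2*Λ.2 1*Λ.2 2 + (1:ℂ)*Λ.1*Λ.1*F1.1*Λ.2 0*Λ.2 1 + (3:ℂ)*Λ.1*Λ.1*F1.2 1*Λ.2 1*Λ.2 2*Complex.I + (1:ℂ)*Λ.1*Λ.1*F1.2 2*Λ.2 0*Λ.2 0*Complex.I + (-2:ℂ)*Λ.1*Λ.1*F1.2 2*Λ.2 1*Λ.2 1*Complex.I + (1:ℂ)*Λ.1*Λ.1*F1.2 2*Λ.2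 2*Λ.2 2*Complex.I + (-1:ℂ)*Λ.1*Λ.1*F2.1*Λ.2 0*Λ.2 0 + (-1:ℂ)*Λ.1*Λ.1*F2.1*Λ.2 2*Λ.2 2 + (-3:ℂ)*Λ.1*Λ.1*F2.2 0*Λ.2 1*Λ.2 2*Complex.I + (3:ℂ)*Λ.1*Λ.1*F2.2 2*Λ.2 0*Λ.2 1*Complex.I + (1:ℂ)*Λ.1*Λ.1*F3.1*Λ.2 1*Λ.2 2 + (-1:ℂ)*Λ.1*Λ.1*F3.2 0*Λ.2 0*Λ.2 0*Complex.I + (2:ℂ)*Λ.1*Λ.1*F3.2 0*Λ.2 1*Λ.2 1*Complex.I + (-1:ℂ)*Λ.1*Λ.1*F3.2 0*Λ.2 2*Λ.2 2*Complex.I + (-3:ℂ)*Λ.1*Λ.1*F3.2 1*Λ.2 0*Λ.2 1*Complex.I + (2:ℂ)*Λ.1*F1.2 1*Λ.2 0 + (2:ℂ)*Λ.1*F1.2 1*Λ.2 0*Λ.2 0*Λ.2 0 + (2:ℂ)*Λ.1*F1.2 1*Λ.2 0*Λ.2 1*Λ.2 1 + (2:ℂ)*Λ.1*F1.2 1*Λ.2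 0*Λ.2 2*Λ.2 2 + (-2:ℂ)*Λ.1*F2.2 0*Λ.2 0 + (-2:ℂ)*Λ.1*F2.2 0*Λ.2 0*Λ.2 0*Λ.2 0 + (-2:ℂ)*Λ.1*F2.2 0*Λ.2 0*Λ.2 1*Λ.2 1 + (-2:ℂ)*Λ.1*F2.2 0*Λ.2 0*Λ.2 2*Λ.2 2 + (-2:ℂ)*Λ.1*F2.2 2*Λ.2 0*Λ.2 0*Λ.2 2 + (-2:ℂ)*Λ.1*F2.2 2*Λ.2 1*Λ.2 1*Λ.2 2 + (-2:ℂ)*Λ.1*F2.2 2*Λ.2 2 + (-2:ℂ)*Λ.1*F2.2 2*Λ.2 2*Λ.2 2*Λ.2 2 + (2:ℂ)*Λ.1*F3.2 1*Λ.2 0*Λ.2 0*Λ.2 2 + (2:ℂ)*Λ.1*F3.2 1*Λ.2 1*Λ.2 1*Λ.2 2 + (2:ℂ)*Λ.1*F3.2 1*Λ.2 2 + (2:ℂ)*Λ.1*F3.2 1*Λ.2 2*Λ.2 2*Λ.2 2 + (-1:ℂ)*F0.2 0*Λ.2 0*Λ.2 0*Λ.2 0*Λ.2 1 + (-1:ℂ)*F0.2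 0*Λ.2 0*Λ.2 1 + (-1:ℂ)*F0.2 0*Λ.2 0*Λ.2 1*Λ.2 1*Λ.2 1 + (-1:ℂ)*F0.2 0*Λ.2 0*Λ.2 1*Λ.2 2*Λ.2 2 + (1:ℂ)*F0.2 1*Λ.2 0*Λ.2 0 + (1:ℂ)*F0.2 1*Λ.2 0*Λ.2 0*Λ.2 0*Λ.2 0 + (1:ℂ)*F0.2 1*Λ.2 0*Λ.2 0*Λ.2 1*Λ.2 1 + (2:ℂ)*F0.2 1*Λ.2 0*Λ.2 0*Λ.2 2*Λ.2 2 + (1:ℂ)*F0.2 1*Λ.2 1*Λ.2 1*Λ.2 2*Λ.2 2 + (1:ℂ)*F0.2 1*Λ.2 2*Λ.2 2 + (1:ℂ)*F0.2 1*Λ.2 2*Λ.2 2*Λ.2 2*Λ.2 2 + (-1:ℂ)*F0.2 2*Λ.2 0*Λ.2 0*Λ.2 1*Λ.2 2 + (-1:ℂ)*F0.2 2*Λ.2 1*Λ.2 1*Λ.2 1*Λ.2 2 + (-1:ℂ)*F0.2 2*Λ.2 1*Λ.2 2 + (-1:ℂ)*F0.2 2*Λ.2 1*Λ.2 2*Λ.2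 2*Λ.2 2 + (-1:ℂ)*F1.1*Λ.2 0*Λ.2 0*Λ.2 0*Λ.2 1 + (-1:ℂ)*F1.1*Λ.2 0*Λ.2 1 + (-1:ℂ)*F1.1*Λ.2 0*Λ.2 1*Λ.2 1*Λ.2 1 + (-1:ℂ)*F1.1*Λ.2 0*Λ.2 1*Λ.2 2*Λ.2 2 + (-2:ℂ)*F1.2 1*Λ.2 0*Λ.2 0*Λ.2 1*Λ.2 2*Complex.I + (1:ℂ)*F1.2 1*Λ.2 0*Λ.2 0*Λ.2 1*Λ.2 2*Complex.I*Complex.I*Complex.I + (-2:ℂ)*F1.2 1*Λ.2 1*Λ.2 1*Λ.2 1*Λ.2 2*Complex.I + (1:ℂ)*F1.2 1*Λ.2 1*Λ.2 1*Λ.2 1*Λ.2 2*Complex.I*Complex.I*Complex.I + (-1:ℂ)*F1.2 1*Λ.2 1*Λ.2 2*Complex.I + (-2:ℂ)*F1.2 1*Λ.2 1*Λ.2 2*Λ.2 2*Λ.2 2*Complex.I + (1:ℂ)*F1.2 1*Λ.2 1*Λ.2 2*Λ.2 2*Λ.2 2*Complex.I*Complex.I*Complex.I + (-1:ℂ)*F1.2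 2*Λ.2 0*Λ.2 0*Complex.I + (-1:ℂ)*F1.2 2*Λ.2 0*Λ.2 0*Λ.2 0*Λ.2 0*Complex.I + (-1:ℂ)*F1.2 2*Λ.2 0*Λ.2 0*Λ.2 1*Λ.2 1*Complex.I*Complex.I*Complex.I + (-2:ℂ)*F1.2 2*Λ.2 0*Λ.2 0*Λ.2 2*Λ.2 2*Complex.I + (1:ℂ)*F1.2 2*Λ.2 1*Λ.2 1*Λ.2 1*Λ.2 1*Complex.I + (-1:ℂ)*F1.2 2*Λ.2 1*Λ.2 1*Λ.2 1*Λ.2 1*Complex.I*Complex.I*Complex.I + (-1:ℂ)*F1.2 2*Λ.2 1*Λ.2 1*Λ.2 2*Λ.2 2*Complex.I*Complex.I*Complex.I + (-1:ℂ)*F1.2 2*Λ.2 2*Λ.2 2*Complex.I + (-1:ℂ)*F1.2 2*Λ.2 2*Λ.2 2*Λ.2 2*Λ.2 2*Complex.I + (1:ℂ)*F2.1*Λ.2 0*Λ.2 0 + (1:ℂ)*F2.1*Λ.2 0*Λ.2 0*Λ.2 0*Λ.2 0 + (1:ℂ)*F2.1*Λ.2 0*Λ.2 0*Λ.2 1*Λ.2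 1 + (2:ℂ)*F2.1*Λ.2 0*Λ.2 0*Λ.2 2*Λ.2 2 + (1:ℂ)*F2.1*Λ.2 1*Λ.2 1*Λ.2 2*Λ.2 2 + (1:ℂ)*F2.1*Λ.2 2*Λ.2 2 + (1:ℂ)*F2.1*Λ.2 2*Λ.2 2*Λ.2 2*Λ.2 2 + (2:ℂ)*F2.2 0*Λ.2 0*Λ.2 0*Λ.2 1*Λ.2 2*Complex.I + (-1:ℂ)*F2.2 0*Λ.2 0*Λ.2 0*Λ.2 1*Λ.2 2*Complex.I*Complex.I*Complex.I + (2:ℂ)*F2.2 0*Λ.2 1*Λ.2 1*Λ.2 1*Λ.2 2*Complex.I + (-1:ℂ)*F2.2 0*Λ.2 1*Λ.2 1*Λ.2 1*Λ.2 2*Complex.I*Complex.I*Complex.I + (1:ℂ)*F2.2 0*Λ.2 1*Λ.2 2*Complex.I + (2:ℂ)*F2.2 0*Λ.2 1*Λ.2 2*Λ.2 2*Λ.2 2*Complex.I + (-1:ℂ)*F2.2 0*Λ.2 1*Λ.2 2*Λ.2 2*Λ.2 2*Complex.I*Complex.I*Complex.I + (-2:ℂ)*F2.2 2*Λ.2 0*Λ.2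 0*Λ.2 0*Λ.2 1*Complex.I + (1:ℂ)*F2.2 2*Λ.2 0*Λ.2 0*Λ.2 0*Λ.2 1*Complex.I*Complex.I*Complex.I + (-1:ℂ)*F2.2 2*Λ.2 0*Λ.2 1*Complex.I + (-2:ℂ)*F2.2 2*Λ.2 0*Λ.2 1*Λ.2 1*Λ.2 1*Complex.I + (1:ℂ)*F2.2 2*Λ.2 0*Λ.2 1*Λ.2 1*Λ.2 1*Complex.I*Complex.I*Complex.I + (-2:ℂ)*F2.2 2*Λ.2 0*Λ.2 1*Λ.2 2*Λ.2 2*Complex.I + (1:ℂ)*F2.2 2*Λ.2 0*Λ.2 1*Λ.2 2*Λ.2 2*Complex.I*Complex.I*Complex.I + (-1:ℂ)*F3.1*Λ.2 0*Λ.2 0*Λ.2 1*Λ.2 2 + (-1:ℂ)*F3.1*Λ.2 1*Λ.2 1*Λ.2 1*Λ.2 2 + (-1:ℂ)*F3.1*Λ.2 1*Λ.2 2 + (-1:ℂ)*F3.1*Λ.2 1*Λ.2 2*Λ.2 2*Λ.2 2 + (1:ℂ)*F3.2 0*Λ.2 0*Λ.2 0*Complex.I + (1:ℂ)*F3.2 0*Λ.2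 0*Λ.2 0*Λ.2 0*Λ.2 0*Complex.I + (1:ℂ)*F3.2 0*Λ.2 0*Λ.2 0*Λ.2 1*Λ.2 1*Complex.I*Complex.I*Complex.I + (2:ℂ)*F3.2 0*Λ.2 0*Λ.2 0*Λ.2 2*Λ.2 2*Complex.I + (-1:ℂ)*F3.2 0*Λ.2 1*Λ.2 1*Λ.2 1*Λ.2 1*Complex.I + (1:ℂ)*F3.2 0*Λ.2 1*Λ.2 1*Λ.2 1*Λ.2 1*Complex.I*Complex.I*Complex.I + (1:ℂ)*F3.2 0*Λ.2 1*Λ.2 1*Λ.2 2*Λ.2 2*Complex.I*Complex.I*Complex.I + (1:ℂ)*F3.2 0*Λ.2 2*Λ.2 2*Complex.I + (1:ℂ)*F3.2 0*Λ.2 2*Λ.2 2*Λ.2 2*Λ.2 2*Complex.I + (2:ℂ)*F3.2 1*Λ.2 0*Λ.2 0*Λ.2 0*Λ.2 1*Complex.I + (-1:ℂ)*F3.2 1*Λ.2 0*Λ.2 0*Λ.2 0*Λ.2 1*Complex.I*Complex.I*Complex.I + (1:ℂ)*F3.2 1*Λ.2 0*Λ.2 1*Complex.I + (2:ℂ)*F3.2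 1*Λ.2 0*Λ.2 1*Λ.2 1*Λ.2 1*Complex.I + (-1:ℂ)*F3.2 1*Λ.2 0*Λ.2 1*Λ.2 1*Λ.2 1*Complex.I*Complex.I*Complex.I + (2:ℂ)*F3.2 1*Λ.2 0*Λ.2 1*Λ.2 2*Λ.2 2*Complex.I + (-1:ℂ)*F3.2 1*Λ.2 0*Λ.2 1*Λ.2 2*Λ.2 2*Complex.I*Complex.I*Complex.I) * Complex.I_mul_I
    · simp only [finmk0, finmk1, finmk2, Dc, cdiv3, cgrad3, ccurl3, Fin.sum_univ_three,
        fs0, fs1, fs2, Efst, Esnd, Rfst, Rsnd]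
      simp (config := { maxSteps := 10000000 }) only [Cg, Lrot, pmul_fst, pmul_snd, revP_fst, revP_snd, cross3_0, cross3_1,
        vec3_at0, vec3_at1, vec3_at2, cross3_2, toPv_fst, toPv_snd, ofPv0, ofPv1, ofPv2, ofPv3, dot3,
        Fin.sum_univ_three, Fin.sum_univ_four, Prod.fst_sum, Prod.snd_sum,
        Finset.sum_apply, Prod.smul_fst, Prod.smul_snd, Pi.smul_apply, smul_eq_mul,
        Pi.single_apply, fs0, fs1, fs2, Fin.reduceEq, reduceIte, if_true, if_false,
        Prod.fst_add, Prod.snd_add, Pi.add_apply]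
      generalize ((fderiv ℂ A ((LrotL Λ) x)) (Pi.single (0:Fin 4) 1)) = F0
      generalize ((fderiv ℂ A ((LrotL Λ) x)) (Pi.single (1:Fin 4) 1)) = F1
      generalize ((fderiv ℂ A ((LrotL Λ) x)) (Pi.single (2:Fin 4) 1)) = F2
      generalize ((fderiv ℂ A ((LrotL Λ) x)) (Pi.single (3:Fin 4) 1)) = F3
      linear_combination ((-2:ℂ)*F0.2 0*Complex.I*Λ.2 1*Λ.1 + (-2:ℂ)*F0.2 0*Λ.2 0*Λ.2 2 + (2:ℂ)*F0.2 1*Complex.I*Λ.2 0*Λ.1 + (-2:ℂ)*F0.2 1*Λ.2 1*Λ.2 2 + (1:ℂ)*F0.2 2*Λ.1*Λ.1 + (1:ℂ)*F0.2 2*Λ.2 0*Λ.2 0 + (1:ℂ)*F0.2 2*Λ.2 1*Λ.2 1 + (-1:ℂ)*F0.2 2*Λ.2 2*Λ.2 2 + (-2:ℂ)*F1.1*Complex.I*Λ.2 1*Λ.1 + (-2:ℂ)*F1.1*Λ.2 0*Λ.2 2 + (1:ℂ)*F1.2 1*Complex.I*Λ.1*Λ.1 + (1:ℂ)*F1.2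 1*Complex.I*Λ.2 0*Λ.2 0 + (1:ℂ)*F1.2 1*Complex.I*Λ.2 1*Λ.2 1 + (-1:ℂ)*F1.2 1*Complex.I*Λ.2 2*Λ.2 2 + (2:ℂ)*F1.2 2*Complex.I*Λ.2 1*Λ.2 2 + (2:ℂ)*F1.2 2*Λ.2 0*Λ.1 + (2:ℂ)*F2.1*Complex.I*Λ.2 0*Λ.1 + (-2:ℂ)*F2.1*Λ.2 1*Λ.2 2 + (-1:ℂ)*F2.2 0*Complex.I*Λ.1*Λ.1 + (-1:ℂ)*F2.2 0*Complex.I*Λ.2 0*Λ.2 0 + (-1:ℂ)*F2.2 0*Complex.I*Λ.2 1*Λ.2 1 + (1:ℂ)*F2.2 0*Complex.I*Λ.2 2*Λ.2 2 + (-2:ℂ)*F2.2 2*Complex.I*Λ.2 0*Λ.2 2 + (2:ℂ)*F2.2 2*Λ.2 1*Λ.1 + (1:ℂ)*F3.1*Λ.1*Λ.1 + (1:ℂ)*F3.1*Λ.2 0*Λ.2 0 + (1:ℂ)*F3.1*Λ.2 1*Λ.2 1 + (-1:ℂ)*F3.1*Λ.2 2*Λ.2 2 + (-2:ℂ)*F3.2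 0*Complex.I*Λ.2 1*Λ.2 2 + (-2:ℂ)*F3.2 0*Λ.2 0*Λ.1 + (2:ℂ)*F3.2 1*Complex.I*Λ.2 0*Λ.2 2 + (-2:ℂ)*F3.2 1*Λ.2 1*Λ.1) * hd + ((-2:ℂ)*Λ.1*Λ.1*Λ.1*F1.2 2*Λ.2 0 + (-2:ℂ)*Λ.1*Λ.1*Λ.1*F2.2 2*Λ.2 1 + (2:ℂ)*Λ.1*Λ.1*Λ.1*F3.2 0*Λ.2 0 + (2:ℂ)*Λ.1*Λ.1*Λ.1*F3.2 1*Λ.2 1 + (1:ℂ)*Λ.1*Λ.1*F0.2 0*Λ.2 0*Λ.2 2 + (1:ℂ)*Λ.1*Λ.1*F0.2 1*Λ.2 1*Λ.2 2 + (-1:ℂ)*Λ.1*Λ.1*F0.2 2*Λ.2 0*Λ.2 0 + (-1:ℂ)*Λ.1*Λ.1*F0.2 2*Λ.2 1*Λ.2 1 + (1:ℂ)*Λ.1*Λ.1*F1.1*Λ.2 0*Λ.2 2 + (-1:ℂ)*Λ.1*Λ.1*F1.2 1*Λ.2 0*Λ.2 0*Complex.I + (-1:ℂ)*Λ.1*Λ.1*F1.2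 1*Λ.2 1*Λ.2 1*Complex.I + (2:ℂ)*Λ.1*Λ.1*F1.2 1*Λ.2 2*Λ.2 2*Complex.I + (-3:ℂ)*Λ.1*Λ.1*F1.2 2*Λ.2 1*Λ.2 2*Complex.I + (1:ℂ)*Λ.1*Λ.1*F2.1*Λ.2 1*Λ.2 2 + (1:ℂ)*Λ.1*Λ.1*F2.2 0*Λ.2 0*Λ.2 0*Complex.I + (1:ℂ)*Λ.1*Λ.1*F2.2 0*Λ.2 1*Λ.2 1*Complex.I + (-2:ℂ)*Λ.1*Λ.1*F2.2 0*Λ.2 2*Λ.2 2*Complex.I + (3:ℂ)*Λ.1*Λ.1*F2.2 2*Λ.2 0*Λ.2 2*Complex.I + (-1:ℂ)*Λ.1*Λ.1*F3.1*Λ.2 0*Λ.2 0 + (-1:ℂ)*Λ.1*Λ.1*F3.1*Λ.2 1*Λ.2 1 + (3:ℂ)*Λ.1*Λ.1*F3.2 0*Λ.2 1*Λ.2 2*Complex.I + (-3:ℂ)*Λ.1*Λ.1*F3.2 1*Λ.2 0*Λ.2 2*Complex.I + (2:ℂ)*Λ.1*F1.2 2*Λ.2 0 + (2:ℂ)*Λ.1*F1.2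 2*Λ.2 0*Λ.2 0*Λ.2 0 + (2:ℂ)*Λ.1*F1.2 2*Λ.2 0*Λ.2 1*Λ.2 1 + (2:ℂ)*Λ.1*F1.2 2*Λ.2 0*Λ.2 2*Λ.2 2 + (2:ℂ)*Λ.1*F2.2 2*Λ.2 0*Λ.2 0*Λ.2 1 + (2:ℂ)*Λ.1*F2.2 2*Λ.2 1 + (2:ℂ)*Λ.1*F2.2 2*Λ.2 1*Λ.2 1*Λ.2 1 + (2:ℂ)*Λ.1*F2.2 2*Λ.2 1*Λ.2 2*Λ.2 2 + (-2:ℂ)*Λ.1*F3.2 0*Λ.2 0 + (-2:ℂ)*Λ.1*F3.2 0*Λ.2 0*Λ.2 0*Λ.2 0 + (-2:ℂ)*Λ.1*F3.2 0*Λ.2 0*Λ.2 1*Λ.2 1 + (-2:ℂ)*Λ.1*F3.2 0*Λ.2 0*Λ.2 2*Λ.2 2 + (-2:ℂ)*Λ.1*F3.2 1*Λ.2 0*Λ.2 0*Λ.2 1 + (-2:ℂ)*Λ.1*F3.2 1*Λ.2 1 + (-2:ℂ)*Λ.1*F3.2 1*Λ.2 1*Λ.2 1*Λ.2 1 + (-2:ℂ)*Λ.1*F3.2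 1*Λ.2 1*Λ.2 2*Λ.2 2 + (-1:ℂ)*F0.2 0*Λ.2 0*Λ.2 0*Λ.2 0*Λ.2 2 + (-1:ℂ)*F0.2 0*Λ.2 0*Λ.2 1*Λ.2 1*Λ.2 2 + (-1:ℂ)*F0.2 0*Λ.2 0*Λ.2 2 + (-1:ℂ)*F0.2 0*Λ.2 0*Λ.2 2*Λ.2 2*Λ.2 2 + (-1:ℂ)*F0.2 1*Λ.2 0*Λ.2 0*Λ.2 1*Λ.2 2 + (-1:ℂ)*F0.2 1*Λ.2 1*Λ.2 1*Λ.2 1*Λ.2 2 + (-1:ℂ)*F0.2 1*Λ.2 1*Λ.2 2 + (-1:ℂ)*F0.2 1*Λ.2 1*Λ.2 2*Λ.2 2*Λ.2 2 + (1:ℂ)*F0.2 2*Λ.2 0*Λ.2 0 + (1:ℂ)*F0.2 2*Λ.2 0*Λ.2 0*Λ.2 0*Λ.2 0 + (2:ℂ)*F0.2 2*Λ.2 0*Λ.2 0*Λ.2 1*Λ.2 1 + (1:ℂ)*F0.2 2*Λ.2 0*Λ.2 0*Λ.2 2*Λ.2 2 + (1:ℂ)*F0.2 2*Λ.2 1*Λ.2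 1 + (1:ℂ)*F0.2 2*Λ.2 1*Λ.2 1*Λ.2 1*Λ.2 1 + (1:ℂ)*F0.2 2*Λ.2 1*Λ.2 1*Λ.2 2*Λ.2 2 + (-1:ℂ)*F1.1*Λ.2 0*Λ.2 0*Λ.2 0*Λ.2 2 + (-1:ℂ)*F1.1*Λ.2 0*Λ.2 1*Λ.2 1*Λ.2 2 + (-1:ℂ)*F1.1*Λ.2 0*Λ.2 2 + (-1:ℂ)*F1.1*Λ.2 0*Λ.2 2*Λ.2 2*Λ.2 2 + (1:ℂ)*F1.2 1*Λ.2 0*Λ.2 0*Complex.I + (1:ℂ)*F1.2 1*Λ.2 0*Λ.2 0*Λ.2 0*Λ.2 0*Complex.I + (2:ℂ)*F1.2 1*Λ.2 0*Λ.2 0*Λ.2 1*Λ.2 1*Complex.I + (1:ℂ)*F1.2 1*Λ.2 0*Λ.2 0*Λ.2 2*Λ.2 2*Complex.I*Complex.I*Complex.I + (1:ℂ)*F1.2 1*Λ.2 1*Λ.2 1*Complex.I + (1:ℂ)*F1.2 1*Λ.2 1*Λ.2 1*Λ.2 1*Λ.2 1*Complex.I + (1:ℂ)*F1.2 1*Λ.2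 1*Λ.2 1*Λ.2 2*Λ.2 2*Complex.I*Complex.I*Complex.I + (-1:ℂ)*F1.2 1*Λ.2 2*Λ.2 2*Λ.2 2*Λ.2 2*Complex.I + (1:ℂ)*F1.2 1*Λ.2 2*Λ.2 2*Λ.2 2*Λ.2 2*Complex.I*Complex.I*Complex.I + (2:ℂ)*F1.2 2*Λ.2 0*Λ.2 0*Λ.2 1*Λ.2 2*Complex.I + (-1:ℂ)*F1.2 2*Λ.2 0*Λ.2 0*Λ.2 1*Λ.2 2*Complex.I*Complex.I*Complex.I + (2:ℂ)*F1.2 2*Λ.2 1*Λ.2 1*Λ.2 1*Λ.2 2*Complex.I + (-1:ℂ)*F1.2 2*Λ.2 1*Λ.2 1*Λ.2 1*Λ.2 2*Complex.I*Complex.I*Complex.I + (1:ℂ)*F1.2 2*Λ.2 1*Λ.2 2*Complex.I + (2:ℂ)*F1.2 2*Λ.2 1*Λ.2 2*Λ.2 2*Λ.2 2*Complex.I + (-1:ℂ)*F1.2 2*Λ.2 1*Λ.2 2*Λ.2 2*Λ.2 2*Complex.I*Complex.I*Complex.I + (-1:ℂ)*F2.1*Λ.2 0*Λ.2 0*Λ.2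 1*Λ.2 2 + (-1:ℂ)*F2.1*Λ.2 1*Λ.2 1*Λ.2 1*Λ.2 2 + (-1:ℂ)*F2.1*Λ.2 1*Λ.2 2 + (-1:ℂ)*F2.1*Λ.2 1*Λ.2 2*Λ.2 2*Λ.2 2 + (-1:ℂ)*F2.2 0*Λ.2 0*Λ.2 0*Complex.I + (-1:ℂ)*F2.2 0*Λ.2 0*Λ.2 0*Λ.2 0*Λ.2 0*Complex.I + (-2:ℂ)*F2.2 0*Λ.2 0*Λ.2 0*Λ.2 1*Λ.2 1*Complex.I + (-1:ℂ)*F2.2 0*Λ.2 0*Λ.2 0*Λ.2 2*Λ.2 2*Complex.I*Complex.I*Complex.I + (-1:ℂ)*F2.2 0*Λ.2 1*Λ.2 1*Complex.I + (-1:ℂ)*F2.2 0*Λ.2 1*Λ.2 1*Λ.2 1*Λ.2 1*Complex.I + (-1:ℂ)*F2.2 0*Λ.2 1*Λ.2 1*Λ.2 2*Λ.2 2*Complex.I*Complex.I*Complex.I + (1:ℂ)*F2.2 0*Λ.2 2*Λ.2 2*Λ.2 2*Λ.2 2*Complex.I + (-1:ℂ)*F2.2 0*Λ.2 2*Λ.2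 2*Λ.2 2*Λ.2 2*Complex.I*Complex.I*Complex.I + (-2:ℂ)*F2.2 2*Λ.2 0*Λ.2 0*Λ.2 0*Λ.2 2*Complex.I + (1:ℂ)*F2.2 2*Λ.2 0*Λ.2 0*Λ.2 0*Λ.2 2*Complex.I*Complex.I*Complex.I + (-2:ℂ)*F2.2 2*Λ.2 0*Λ.2 1*Λ.2 1*Λ.2 2*Complex.I + (1:ℂ)*F2.2 2*Λ.2 0*Λ.2 1*Λ.2 1*Λ.2 2*Complex.I*Complex.I*Complex.I + (-1:ℂ)*F2.2 2*Λ.2 0*Λ.2 2*Complex.I + (-2:ℂ)*F2.2 2*Λ.2 0*Λ.2 2*Λ.2 2*Λ.2 2*Complex.I + (1:ℂ)*F2.2 2*Λ.2 0*Λ.2 2*Λ.2 2*Λ.2 2*Complex.I*Complex.I*Complex.I + (1:ℂ)*F3.1*Λ.2 0*Λ.2 0 + (1:ℂ)*F3.1*Λ.2 0*Λ.2 0*Λ.2 0*Λ.2 0 + (2:ℂ)*F3.1*Λ.2 0*Λ.2 0*Λ.2 1*Λ.2 1 + (1:ℂ)*F3.1*Λ.2 0*Λ.2 0*Λ.2 2*Λ.2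 2 + (1:ℂ)*F3.1*Λ.2 1*Λ.2 1 + (1:ℂ)*F3.1*Λ.2 1*Λ.2 1*Λ.2 1*Λ.2 1 + (1:ℂ)*F3.1*Λ.2 1*Λ.2 1*Λ.2 2*Λ.2 2 + (-2:ℂ)*F3.2 0*Λ.2 0*Λ.2 0*Λ.2 1*Λ.2 2*Complex.I + (1:ℂ)*F3.2 0*Λ.2 0*Λ.2 0*Λ.2 1*Λ.2 2*Complex.I*Complex.I*Complex.I + (-2:ℂ)*F3.2 0*Λ.2 1*Λ.2 1*Λ.2 1*Λ.2 2*Complex.I + (1:ℂ)*F3.2 0*Λ.2 1*Λ.2 1*Λ.2 1*Λ.2 2*Complex.I*Complex.I*Complex.I + (-1:ℂ)*F3.2 0*Λ.2 1*Λ.2 2*Complex.I + (-2:ℂ)*F3.2 0*Λ.2 1*Λ.2 2*Λ.2 2*Λ.2 2*Complex.I + (1:ℂ)*F3.2 0*Λ.2 1*Λ.2 2*Λ.2 2*Λ.2 2*Complex.I*Complex.I*Complex.I + (2:ℂ)*F3.2 1*Λ.2 0*Λ.2 0*Λ.2 0*Λ.2 2*Complex.I + (-1:ℂ)*F3.2 1*Λ.2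 0*Λ.2 0*Λ.2 0*Λ.2 2*Complex.I*Complex.I*Complex.I + (2:ℂ)*F3.2 1*Λ.2 0*Λ.2 1*Λ.2 1*Λ.2 2*Complex.I + (-1:ℂ)*F3.2 1*Λ.2 0*Λ.2 1*Λ.2 1*Λ.2 2*Complex.I*Complex.I*Complex.I + (1:ℂ)*F3.2 1*Λ.2 0*Λ.2 2*Complex.I + (2:ℂ)*F3.2 1*Λ.2 0*Λ.2 2*Λ.2 2*Λ.2 2*Complex.I + (-1:ℂ)*F3.2 1*Λ.2 0*Λ.2 2*Λ.2 2*Λ.2 2*Complex.I*Complex.I*Complex.I) * Complex.I_mul_I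
end
end
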